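/- arXiv:1602.00285 — 8 statements merged into one kernel-verified Lean document; each statement's English description precedes it below -/
import Mathlib

section
/- Let A = (a_1, ..., a_m) be a configuration (an n×m integer matrix whose columns all lie on a common affine hyperplane not through the origin). Suppose a_{i_1} + ... + a_{i_r} = a_{j_1} + ... + a_{j_r} with r ≥ 3 and {i_1,...,i_r} ∩ {j_1,...,j_r} = ∅, and suppose that for all 1 ≤ k < ℓ ≤ r and all 1 ≤ p, q ≤ m, the equality a_{i_k} + a_{i_ℓ} = a_p + a_q holds if and only if {i_k, i_ℓ} = {p, q}. Then the toric ideal I_A is not generated by quadratic binomials. -/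
/-!
Let `x^M = x_{i_1} ⋯ x_{i_r}` and `x^N = x_{j_1} ⋯ x_{j_r}`; the binomial `x^M - x^N` lies in `I_A`.
A quadratic binomial `x_p x_q - x_{p'} x_{q'}` of `I_A` satisfies `a_p + a_q = a_{p'} + a_{q'}`.
If one of its terms divides `x^M`, that term is some `x_{i_k} x_{i_l}` with `k ≠ l`, and the unique
representation of `a_{i_k} + a_{i_l}` forces the other term to be the same monomial, so the
binomial is zero. Hence `x^M` has coefficient zero in every element of the ideal generated by
quadratic binomials of `I_A`, but coefficient one in `x^M - x^N`.
-/

open MvPolynomial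

section Toric

variable {ι G : Type*} [AddCommGroup G] (K : Type*) [CommRing K] (A : ι → G)

noncomputable def toricHom : MvPolynomial ι K →ₐ[K] AddMonoidAlgebra K G :=
  aeval fun k => AddMonoidAlgebra.single (A k) 1

theorem toricHom_X_mul_X (p q : ι) :
    toricHom K A (X p * X q) = AddMonoidAlgebra.single (A p + A q) 1 := by
  simp [toricHom, AddMonoidAlgebra.single_mul_single]

variable [Fintype ι]

noncomputable def toricIdeal : Ideal (MvPolynomial ι K) :=
  Ideal.span {f | ∃ b : ι → ℤ, ∑ k, b k • A k = 0 ∧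
    f = ∏ k, X k ^ (b k).toNat - ∏ k, X k ^ (-(b k)).toNat}

theorem toricHom_prod_X_pow (e : ι → ℕ) :
    toricHom K A (∏ k, X k ^ e k) = AddMonoidAlgebra.single (∑ k, e k • A k) 1 := by
  simp [toricHom, AddMonoidAlgebra.single_pow, AddMonoidAlgebra.prod_single]

theorem toricIdeal_le_ker_toricHom : toricIdeal K A ≤ RingHom.ker (toricHom K A) := by
  refine Ideal.span_le.2 ?_
  rintro _ ⟨b, hb, rfl⟩
  have hdeg : ∑ k, (b k).toNat • A k = ∑ k, (-(b k)).toNat • A k := by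
    rw [← sub_eq_zero, ← Finset.sum_sub_distrib, ← hb]
    refine Finset.sum_congr rfl fun k _ => ?_
    rw [← natCast_zsmul, ← natCast_zsmul, ← sub_smul, Int.toNat_sub_toNat_neg]
  rw [SetLike.mem_coe, RingHom.mem_ker, map_sub, toricHom_prod_X_pow, toricHom_prod_X_pow, hdeg,
    sub_self]

theorem monomial_one_eq_prod_X_pow (M : ι →₀ ℕ) : monomial M (1 : K) = ∏ k, X k ^ M k := by
  rw [← prod_X_pow_eq_monomial]
  exact Finset.prod_subset (Finset.subset_univ _) fun k _ hk => by
    rw [Finsupp.notMem_support_iff.1 hk, pow_zero]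

theorem monomial_sub_monomial_mem_toricIdeal {M N : ι →₀ ℕ}
    (h : ∑ k, M k • A k = ∑ k, N k • A k) :
    monomial M (1 : K) - monomial N 1 ∈ toricIdeal K A := by
  have hgen : monomial (M - N) (1 : K) - monomial (N - M) 1 ∈ toricIdeal K A := by
    refine Ideal.subset_span ⟨fun k => M k - N k, ?_, ?_⟩
    · simp [sub_smul, Finset.sum_sub_distrib, h]
    · rw [monomial_one_eq_prod_X_pow, monomial_one_eq_prod_X_pow]
      congr 1 <;> refine Finset.prod_congr rfl fun k _ => ?_ <;> simp
  have hsplit : monomial M (1 : K) - monomial N 1 =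
      monomial (M ⊓ N) 1 * (monomial (M - N) 1 - monomial (N - M) 1) := by
    rw [mul_sub, monomial_mul, monomial_mul, one_mul]
    congr 3 <;> ext k <;> simp <;> omega
  rw [hsplit]
  exact Ideal.mul_mem_left _ _ hgen

theorem add_eq_add_of_X_mul_X_sub_mem_toricIdeal [Nontrivial K] {p q p' q' : ι}
    (h : X p * X q - X p' * X q' ∈ toricIdeal K A) : A p + A q = A p' + A q' := by
  have h0 := toricIdeal_le_ker_toricHom K A h
  rw [RingHom.mem_ker, map_sub, toricHom_X_mul_X, toricHom_X_mul_X, sub_eq_zero] at h0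
  exact ((AddMonoidAlgebra.single_inj.1 h0).resolve_right fun h => one_ne_zero h.1).1

end Toric

section Coefficients

variable {σ R : Type*} [CommSemiring R]

theorem coeff_eq_zero_of_mem_ideal_span {S : Set (MvPolynomial σ R)} {M : σ →₀ ℕ}
    (hS : ∀ s ∈ S, ∀ g, coeff M (g * s) = 0) {f : MvPolynomial σ R} (hf : f ∈ Ideal.span S) :
    coeff M f = 0 := by
  suffices ∀ g, coeff M (g * f) = 0 by simpa using this 1
  induction hf using Submodule.span_induction with
  | mem s hs => exact hS s hs
  | zero => simp
  | add x y _ _ hx hy => intro g; rw [mul_add, coeff_add, hx, hy, add_zero]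
  | smul c x _ hx => intro g; rw [smul_eq_mul, ← mul_assoc, hx]

theorem single_add_single_le_of_coeff_mul_X_mul_X_ne_zero {M : σ →₀ ℕ} {g : MvPolynomial σ R}
    {p q : σ} (h : coeff M (g * (X p * X q)) ≠ 0) :
    Finsupp.single p 1 + Finsupp.single q 1 ≤ M := by
  rw [X, X, monomial_mul, one_mul, coeff_mul_monomial'] at h
  exact of_not_not fun hle => h (if_neg hle)

end Coefficients

section IndexExponent

variable {κ ι : Type*} [Fintype κ]

noncomputable def indexExponent (v : κ → ι) : ι →₀ ℕ := ∑ t, Finsupp.single (v t) 1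

theorem indexExponent_apply [DecidableEq ι] (v : κ → ι) (p : ι) :
    indexExponent v p = (Finset.univ.filter fun t => v t = p).card := by
  simp [indexExponent, Finsupp.finsetSum_apply, Finsupp.single_apply]

theorem indexExponent_apply_ne_zero_iff {v : κ → ι} {p : ι} :
    indexExponent v p ≠ 0 ↔ ∃ t, v t = p := by
  classical
  simp [indexExponent_apply]

theorem sum_indexExponent_smul {M : Type*} [AddCommMonoid M] [Fintype ι] (v : κ → ι) (a : ι → M) :
    ∑ p, indexExponent v p • a p = ∑ t, a (v t) := by
  calc ∑ p, indexExponent v p • a p = Finsupp.linearCombination ℕ a (indexExponent v) := by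
        rw [Finsupp.linearCombination_apply, Finsupp.sum_fintype _ _ fun _ => zero_smul ℕ (a _)]
    _ = ∑ t, a (v t) := by simp [indexExponent]

theorem exists_ne_of_single_add_single_le_indexExponent {v : κ → ι} {p q : ι}
    (h : Finsupp.single p 1 + Finsupp.single q 1 ≤ indexExponent v) :
    ∃ k l, k ≠ l ∧ v k = p ∧ v l = q := by
  classical
  by_cases hpq : p = q
  · subst hpq
    have h2 : 2 ≤ (Finset.univ.filter fun t => v t = p).card := by
      simpa [indexExponent_apply] using h p
    obtain ⟨k, hk, l, hl, hkl⟩ := Finset.one_lt_card.1 h2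
    exact ⟨k, l, hkl, (Finset.mem_filter.1 hk).2, (Finset.mem_filter.1 hl).2⟩
  · have hp : indexExponent v p ≠ 0 := by
      have := h p
      simp [hpq] at this
      omega
    have hq : indexExponent v q ≠ 0 := by
      have := h q
      simp [Ne.symm hpq] at this
      omega
    obtain ⟨k, rfl⟩ := indexExponent_apply_ne_zero_iff.1 hp
    obtain ⟨l, rfl⟩ := indexExponent_apply_ne_zero_iff.1 hq
    exact ⟨k, l, fun hkl => hpq (congrArg v hkl), rfl, rfl⟩

theorem indexExponent_ne_of_disjoint [Nonempty κ] {κ' : Type*} [Fintype κ'] {v : κ → ι}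
    {w : κ' → ι} (h : ∀ k l, v k ≠ w l) : indexExponent v ≠ indexExponent w := by
  intro hvw
  obtain ⟨k⟩ := ‹Nonempty κ›
  have hk : indexExponent w (v k) ≠ 0 := hvw ▸ indexExponent_apply_ne_zero_iff.2 ⟨k, rfl⟩
  obtain ⟨l, hl⟩ := indexExponent_apply_ne_zero_iff.1 hk
  exact h k l hl.symm

end IndexExponent

theorem coeff_indexExponent_mul_X_mul_X_sub_eq_zero {κ ι G : Type*} [Fintype κ] [AddCommMonoid G]
    {R : Type*} [CommRing R] {v : κ → ι} {A : ι → G}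
    (hv : ∀ k l, k ≠ l → ∀ p q, A (v k) + A (v l) = A p + A q →
      ({v k, v l} : Multiset ι) = {p, q})
    {p q p' q' : ι} (h : A p + A q = A p' + A q') (g : MvPolynomial ι R) :
    coeff (indexExponent v) (g * (X p * X q - X p' * X q')) = 0 := by
  have hX : ∀ {a b c d}, A a + A b = A c + A d → coeff (indexExponent v) (g * (X a * X b)) ≠ 0 →
      (X a * X b : MvPolynomial ι R) = X c * X d := by
    intro a b c d habcd hne
    obtain ⟨k, l, hkl, rfl, rfl⟩ := exists_ne_of_single_add_single_le_indexExponent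
      (single_add_single_le_of_coeff_mul_X_mul_X_ne_zero hne)
    simpa using congrArg (fun s => (s.map (X (R := R))).prod) (hv k l hkl c d habcd)
  by_cases hpq : coeff (indexExponent v) (g * (X p * X q)) = 0
  · by_cases hpq' : coeff (indexExponent v) (g * (X p' * X q')) = 0
    · rw [mul_sub, coeff_sub, hpq, hpq', sub_self]
    · rw [hX h.symm hpq', sub_self, mul_zero, coeff_zero]
  · rw [hX h hpq, sub_self, mul_zero, coeff_zero]

theorem stmt0_general (K : Type*) [Field K] (n m r : ℕ) (hr : 3 ≤ r)
    (A : Fin m → Fin n → ℤ)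
    (i j : Fin r → Fin m)
    (hdisj : ∀ k l : Fin r, i k ≠ j l)
    (hsum : ∑ k, A (i k) = ∑ k, A (j k))
    (huniq : ∀ k l : Fin r, k < l → ∀ p q : Fin m,
      A (i k) + A (i l) = A p + A q ↔ ({i k, i l} : Multiset (Fin m)) = {p, q}) :
    ¬ ∃ S : Set (MvPolynomial (Fin m) K),
        (∀ f ∈ S, ∃ p q p' q' : Fin m, f = X p * X q - X p' * X q') ∧
        Ideal.span S =
          Ideal.span { f | ∃ b : Fin m → ℤ,
            (∑ k, b k • A k) = 0 ∧
            f = (∏ k, X k ^ (b k).toNat) - ∏ k, X k ^ (-(b k)).toNat } := by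
  rintro ⟨S, hquad, hspan⟩
  change Ideal.span S = toricIdeal K A at hspan
  have hi : ∀ k l, k ≠ l → ∀ p q, A (i k) + A (i l) = A p + A q →
      ({i k, i l} : Multiset (Fin m)) = {p, q} := by
    intro k l hkl p q h
    rcases hkl.lt_or_gt with hlt | hlt
    · exact (huniq k l hlt p q).1 h
    · rw [Multiset.pair_comm]
      exact (huniq l k hlt p q).1 (by rwa [add_comm])
  have hf : monomial (indexExponent i) (1 : K) - monomial (indexExponent j) 1 ∈ Ideal.span S := by
    rw [hspan]
    exact monomial_sub_monomial_mem_toricIdeal K A (by simpa only [sum_indexExponent_smul])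
  have hcoeff := coeff_eq_zero_of_mem_ideal_span (M := indexExponent i) (fun s hs g => ?_) hf
  · have : Nonempty (Fin r) := ⟨⟨0, by omega⟩⟩
    rw [coeff_sub, coeff_monomial, coeff_monomial, if_pos rfl,
      if_neg (indexExponent_ne_of_disjoint hdisj).symm, sub_zero] at hcoeff
    exact one_ne_zero hcoeff
  obtain ⟨p, q, p', q', rfl⟩ := hquad s hs
  exact coeff_indexExponent_mul_X_mul_X_sub_eq_zero hi
    (add_eq_add_of_X_mul_X_sub_mem_toricIdeal K A (hspan ▸ Ideal.subset_span hs)) g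

/-- If a configuration `A` admits a relation
`a_{i_1}+...+a_{i_r} = a_{j_1}+...+a_{j_r}` (`r ≥ 3`) with disjoint index sets such that
sums of two columns from the `i`-side are uniquely represented, then the toric ideal
`I_A` is not generated by quadratic binomials. -/
theorem stmt0 (K : Type*) [Field K] (n m r : ℕ) (hr : 3 ≤ r)
    (A : Fin m → Fin n → ℤ)
    (hconf : ∃ c : Fin n → ℝ, ∀ j : Fin m, (∑ i, (A j i : ℝ) * c i) = 1)
    (i j : Fin r → Fin m)
    (hdisj : ∀ k l : Fin r, i k ≠ j l)
    (hsum : ∑ k, A (i k) = ∑ k, A (j k))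
    (huniq : ∀ k l : Fin r, k < l → ∀ p q : Fin m,
      A (i k) + A (i l) = A p + A q ↔ ({i k, i l} : Multiset (Fin m)) = {p, q}) :
    ¬ ∃ S : Set (MvPolynomial (Fin m) K),
        (∀ f ∈ S, ∃ p q p' q' : Fin m, f = X p * X q - X p' * X q') ∧
        Ideal.span S =
          Ideal.span { f | ∃ b : Fin m → ℤ,
            (∑ k, b k • A k) = 0 ∧
            f = (∏ k, X k ^ (b k).toNat) - ∏ k, X k ^ (-(b k)).toNat } :=
  stmt0_general K n m r hr A i j hdisj hsum huniq
end

section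
/- Every induced cycle of the comparability graph of a finite partially ordered set has even length unless it is a triangle. More precisely, any induced cycle of length at least 4 in a comparability graph has even length. -/
/-!
Orient every edge of the cycle upwards in the order. If two consecutive edges pointed the same
way, say `c s < c (s + 1) < c (s + 2)`, transitivity would make `c s` and `c (s + 2)` comparable,
a chord as soon as the cycle has length at least 4. So the orientations alternate around the
cycle, which forces its length to be even.
-/

def comparabilityGraph (α : Type*) [LE α] : SimpleGraph α :=
  SimpleGraph.fromRel (· ≤ ·)

theorem comparabilityGraph_adj {α : Type*} [LE α] {a b : α} :
    (comparabilityGraph α).Adj a b ↔ a ≠ b ∧ (a ≤ b ∨ b ≤ a) :=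
  SimpleGraph.fromRel_adj _ a b

theorem comparabilityGraph.le_iff_not_le_of_not_adj {α : Type*} [PartialOrder α] {a b c : α}
    (hab : (comparabilityGraph α).Adj a b) (hbc : (comparabilityGraph α).Adj b c)
    (hac : ¬ (comparabilityGraph α).Adj a c) : a ≤ b ↔ ¬ b ≤ c := by
  rw [comparabilityGraph_adj] at hab hbc hac
  obtain ⟨hab_ne, hab_le | hba_le⟩ := hab
  · refine iff_of_true hab_le fun hbc_le => hac ⟨?_, .inl (hab_le.trans hbc_le)⟩
    rintro rfl
    exact hab_ne (le_antisymm hab_le hbc_le)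
  · refine iff_of_false (fun hab_le => hab_ne (le_antisymm hab_le hba_le)) (not_not.mpr ?_)
    refine hbc.2.resolve_right fun hcb_le => hac ⟨?_, .inr (hcb_le.trans hba_le)⟩
    rintro rfl
    exact hbc.1 (le_antisymm hba_le hcb_le)

open Fin.NatCast in
theorem Fin.even_of_forall_add_one_iff_not {n : ℕ} [NeZero n] (p : Fin n → Prop)
    (hp : ∀ s, p (s + 1) ↔ ¬ p s) : Even n := by
  have key : ∀ i : ℕ, p i ↔ (p 0 ↔ Even i) := by
    intro i
    induction i with
    | zero => simp
    | succ i ih =>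
      rw [Nat.cast_succ, hp, ih, Nat.even_add_one]
      tauto
  have := key n
  rw [Fin.natCast_self] at this
  tauto

open Fin.CommRing in
theorem Fin.not_add_one_add_one_eq_add_one_or_eq_add_one_add_one_add_one {n : ℕ} [NeZero n]
    (hn : 4 ≤ n) (s : Fin n) : ¬ (s + 1 + 1 = s + 1 ∨ s = s + 1 + 1 + 1) := by
  rintro (h | h)
  · have h' := congrArg Fin.val (show (1 : Fin n) = 0 by linear_combination h)
    rw [Fin.val_one', Fin.val_zero, Nat.mod_eq_of_lt (by omega)] at h'
    omega
  · have h' := congrArg Fin.val (show (3 : Fin n) = 0 by linear_combination -h)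
    rw [Fin.coe_ofNat_eq_mod, Fin.val_zero, Nat.mod_eq_of_lt (by omega)] at h'
    omega

theorem stmt1_general (α : Type*) [PartialOrder α] (k : ℕ)
    (c : Fin (k + 4) → α)
    (hcyc : ∀ s t : Fin (k + 4),
      (c s ≠ c t ∧ (c s ≤ c t ∨ c t ≤ c s)) ↔ (t = s + 1 ∨ s = t + 1)) :
    Even (k + 4) := by
  have hadj : ∀ s t, (comparabilityGraph α).Adj (c s) (c t) ↔ (t = s + 1 ∨ s = t + 1) :=
    fun s t => comparabilityGraph_adj.trans (hcyc s t)
  refine Fin.even_of_forall_add_one_iff_not (fun s => c s ≤ c (s + 1)) fun s => ?_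
  refine iff_not_comm.mp (comparabilityGraph.le_iff_not_le_of_not_adj ?_ ?_ ?_)
  · exact (hadj _ _).mpr (.inl rfl)
  · exact (hadj _ _).mpr (.inl rfl)
  · rw [hadj]
    exact Fin.not_add_one_add_one_eq_add_one_or_eq_add_one_add_one_add_one (by omega) s

/-- every induced cycle of length at least 4 in the comparability graph of a
finite poset has even length. (Lengths `≥ 4` are written as `k + 4`.) -/
theorem stmt1 (α : Type*) [Fintype α] [PartialOrder α] (k : ℕ)
    (c : Fin (k + 4) → α) (hinj : Function.Injective c)
    (hcyc : ∀ s t : Fin (k + 4),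
      (c s ≠ c t ∧ (c s ≤ c t ∨ c t ≤ c s)) ↔ (t = s + 1 ∨ s = t + 1)) :
    Even (k + 4) :=
  stmt1_general α k c hcyc
end

section
/- A graph G has a perfect elimination ordering if and only if G is chordal (every induced cycle has length 3). -/
/-!
A perfect elimination ordering forbids long induced cycles: the earliest vertex of such a cycle
has two later, non-adjacent neighbours on it.

Conversely, a chordal graph has a simplicial vertex, and removing such vertices one at a time
gives the ordering. To find one in a vertex set `s`, fix `u ∈ s` and a component `C` of
`s - N[u]`. A vertex outside `C` adjacent to `C` is a neighbour of `u`, and two non-adjacent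
such vertices `x, y` would close, together with a shortest `x`-`y` path through `C` and the
vertex `u`, an induced cycle of length at least four. So the neighbourhood `S` of `C` is a
clique, and induction applied to `C ∪ S` — strengthened to produce a simplicial vertex outside
any prescribed clique, here `S` — gives a vertex of `C` that is simplicial in `C ∪ S`, hence
in `s`, since all its neighbours in `s` lie in `C ∪ S`.
-/

/-- `e` is a perfect elimination ordering of `G`. -/
def IsPEO {V : Type*} (G : SimpleGraph V) {n : ℕ} (e : Fin n ≃ V) : Prop :=
  ∀ i j k : Fin n, i < j → i < k → j ≠ k →
    G.Adj (e i) (e j) → G.Adj (e i) (e k) → G.Adj (e j) (e k)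

theorem Fin.eq_add_one_iff_val {n : ℕ} (s t : Fin (n + 1)) :
    t = s + 1 ↔ (t : ℕ) = s + 1 ∨ ((s : ℕ) = n ∧ (t : ℕ) = 0) := by
  rw [Fin.ext_iff, Fin.val_add_one]
  split_ifs with h
  · have := t.isLt
    simp [Fin.ext_iff] at h
    omega
  · have : (s : ℕ) ≠ n := fun h' => h (Fin.ext h')
    omega

namespace SimpleGraph

variable {V : Type*} (G : SimpleGraph V)

def IsInducedCycle {n : ℕ} [NeZero n] (c : Fin n → V) : Prop :=
  Function.Injective c ∧ ∀ s t, G.Adj (c s) (c t) ↔ (t = s + 1 ∨ s = t + 1)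

def IsChordal : Prop :=
  ∀ (k : ℕ) (c : Fin (k + 4) → V), ¬G.IsInducedCycle c

def IsInducedPath (m : ℕ) (p : ℕ → V) : Prop :=
  Set.InjOn p {i | i ≤ m} ∧ ∀ i ≤ m, ∀ j ≤ m, (G.Adj (p i) (p j) ↔ j = i + 1 ∨ i = j + 1)

def IsSimplicialIn (s : Set V) (v : V) : Prop :=
  G.IsClique (G.neighborSet v ∩ s)

variable {G}

theorem _root_.IsPEO.isChordal {n : ℕ} {e : Fin n ≃ V} (he : IsPEO G e) : G.IsChordal := by
  rintro k c ⟨hinj, hadj⟩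
  obtain ⟨s, hs⟩ := Finite.exists_min (e.symm ∘ c)
  have later : ∀ t ≠ s, e.symm (c s) < e.symm (c t) := fun t hts =>
    (hs t).lt_of_ne fun h => hts (hinj (e.symm.injective h)).symm
  obtain ⟨a, hsa⟩ : ∃ a, s = a + 1 := ⟨s - 1, (sub_add_cancel s 1).symm⟩
  obtain ⟨b, hbs⟩ : ∃ b, b = s + 1 := ⟨_, rfl⟩
  have hsa' := (Fin.eq_add_one_iff_val a s).1 hsa
  have hbs' := (Fin.eq_add_one_iff_val s b).1 hbs
  have := a.isLt
  have := b.isLt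
  have hab : ¬(a = b + 1 ∨ b = a + 1) := by
    rw [Fin.eq_add_one_iff_val, Fin.eq_add_one_iff_val]
    omega
  have hne : a ≠ s ∧ b ≠ s ∧ b ≠ a := by
    refine ⟨?_, ?_, ?_⟩ <;> intro h <;> have := congrArg Fin.val h <;> omega
  have key := he _ _ _ (later b hne.2.1) (later a hne.1)
    (fun h => hne.2.2 (hinj (e.symm.injective h)))
    (by simpa using (hadj s b).2 (Or.inl hbs)) (by simpa using (hadj s a).2 (Or.inr hsa))
  simp only [Equiv.apply_symm_apply] at key
  exact hab ((hadj b a).1 key)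

theorem spanningCoe_induce_adj {S : Set V} {x y : V} :
    (G.induce S).spanningCoe.Adj x y ↔ G.Adj x y ∧ x ∈ S ∧ y ∈ S := by
  simp

theorem spanningCoe_induce_mono {S T : Set V} (h : S ⊆ T) :
    (G.induce S).spanningCoe ≤ (G.induce T).spanningCoe := by
  intro x y
  simp only [spanningCoe_induce_adj]
  exact fun ⟨hxy, hx, hy⟩ => ⟨hxy, h hx, h hy⟩

theorem Walk.mem_of_mem_support_spanningCoe_induce {S : Set V} {x y : V}
    (w : (G.induce S).spanningCoe.Walk x y) (hx : x ∈ S) {v : V} (hv : v ∈ w.support) :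
    v ∈ S := by
  induction w with
  | nil => simp_all
  | cons h w ih =>
    rcases List.mem_cons.1 hv with rfl | hv
    · exact hx
    · exact ih (spanningCoe_induce_adj.1 h).2.2 hv

theorem Reachable.mem_of_spanningCoe_induce {S : Set V} {x y : V}
    (h : (G.induce S).spanningCoe.Reachable x y) (hx : x ∈ S) : y ∈ S :=
  h.elim fun w => w.mem_of_mem_support_spanningCoe_induce hx w.end_mem_support

/-- Shortcutting a chord of a shortest walk would give a shorter one. -/
theorem Walk.isInducedPath_getVert {x y : V} {w : G.Walk x y} (hw : w.length = G.dist x y) :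
    G.IsInducedPath w.length w.getVert := by
  have chord : ∀ i j, i < j → j ≤ w.length → G.Adj (w.getVert i) (w.getVert j) → j = i + 1 :=
    fun i j hij hj hadj => by
      have := dist_le ((w.take i).append (cons hadj (w.drop j)))
      simp only [length_append, length_cons, take_length, drop_length] at this
      omega
  refine ⟨(w.isPath_of_length_eq_dist hw).getVert_injOn, fun i hi j hj => ⟨fun hadj => ?_, ?_⟩⟩
  · rcases lt_trichotomy i j with h | rfl | h
    · exact Or.inl (chord i j h hj hadj)
    · exact absurd hadj (G.irrefl)
    · exact Or.inr (chord j i h hi hadj.symm)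
  · rintro (rfl | rfl)
    · exact w.adj_getVert_succ (by omega)
    · exact (w.adj_getVert_succ (by omega)).symm

theorem IsInducedPath.of_spanningCoe_induce {S : Set V} {m : ℕ} {p : ℕ → V}
    (h : (G.induce S).spanningCoe.IsInducedPath m p) (hS : ∀ i ≤ m, p i ∈ S) :
    G.IsInducedPath m p :=
  ⟨h.1, fun i hi j hj => by
    rw [← h.2 i hi j hj, spanningCoe_induce_adj]
    exact ⟨fun hadj => ⟨hadj, hS i hi, hS j hj⟩, And.left⟩⟩

theorem Reachable.exists_isInducedPath {S : Set V} {x y : V}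
    (h : (G.induce S).spanningCoe.Reachable x y) (hx : x ∈ S) :
    ∃ m p, p 0 = x ∧ p m = y ∧ G.IsInducedPath m p ∧ ∀ i ≤ m, p i ∈ S := by
  obtain ⟨w, hw⟩ := h.exists_walk_length_eq_dist
  have hS : ∀ i ≤ w.length, w.getVert i ∈ S := fun i _ =>
    w.mem_of_mem_support_spanningCoe_induce hx (w.getVert_mem_support i)
  exact ⟨w.length, w.getVert, w.getVert_zero, w.getVert_length,
    (Walk.isInducedPath_getVert hw).of_spanningCoe_induce hS, hS⟩

theorem IsInducedPath.isInducedCycle_snoc {m : ℕ} {p : ℕ → V} {u : V}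
    (hp : G.IsInducedPath m p) (hne : ∀ i ≤ m, p i ≠ u)
    (hu : ∀ i ≤ m, G.Adj (p i) u ↔ (i = 0 ∨ i = m)) :
    G.IsInducedCycle (fun i : Fin (m + 2) => if (i : ℕ) ≤ m then p i else u) := by
  constructor
  · intro s t hst
    have := s.isLt
    have := t.isLt
    refine Fin.ext ?_
    dsimp only at hst
    split_ifs at hst with hs ht ht
    · exact hp.1 hs ht hst
    · exact absurd hst (hne s hs)
    · exact absurd hst.symm (hne t ht)
    · omega
  · intro s t
    rw [Fin.eq_add_one_iff_val, Fin.eq_add_one_iff_val]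
    have := s.isLt
    have := t.isLt
    dsimp only
    split_ifs with hs ht ht
    · rw [hp.2 s hs t ht]; omega
    · rw [hu s hs]; omega
    · rw [G.adj_comm, hu t ht]; omega
    · simp only [G.irrefl, false_iff]; omega

theorem IsChordal.adj_of_reachable (hG : G.IsChordal) {u x y a b : V} {T : Set V}
    (hT : ∀ v ∈ T, v ≠ u ∧ ¬G.Adj u v) (hx : G.Adj u x) (hy : G.Adj u y) (hxy : x ≠ y)
    (ha : a ∈ T) (hb : b ∈ T) (hxa : G.Adj x a) (hby : G.Adj b y)
    (hab : (G.induce T).spanningCoe.Reachable a b) : G.Adj x y := by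
  by_contra hnxy
  set S := insert x (insert y T)
  have hreach : (G.induce S).spanningCoe.Reachable x y := by
    have hTS : T ⊆ S := (Set.subset_insert _ _).trans (Set.subset_insert _ _)
    refine ((Adj.reachable ?_).trans (hab.mono (spanningCoe_induce_mono hTS))).trans
      (Adj.reachable ?_)
    · exact spanningCoe_induce_adj.2 ⟨hxa, by simp [S], hTS ha⟩
    · exact spanningCoe_induce_adj.2 ⟨hby, hTS hb, by simp [S]⟩
  obtain ⟨m, p, hp0, hpm, hp, hpS⟩ := hreach.exists_isInducedPath (by simp [S])
  have hinner : ∀ i, 0 < i → i < m → p i ∈ T := fun i h0 hm => by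
    rcases hpS i hm.le with h | h | h
    · exact absurd (hp.1 hm.le (Nat.zero_le m) (h.trans hp0.symm)) h0.ne'
    · exact absurd (hp.1 hm.le (Nat.le_refl m) (h.trans hpm.symm)) hm.ne
    · exact h
  obtain ⟨k, rfl⟩ : ∃ k, m = k + 2 := by
    refine ⟨m - 2, ?_⟩
    rcases m with _ | _ | m
    · exact absurd (hp0.symm.trans hpm) hxy
    · exact absurd (hp0 ▸ hpm ▸ (hp.2 0 (by omega) 1 le_rfl).2 (Or.inl rfl)) hnxy
    · omega
  refine hG k _ (hp.isInducedCycle_snoc (u := u) (fun i hi => ?_) (fun i hi => ⟨fun h => ?_, ?_⟩))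
  · rcases hpS i hi with h | h | h
    · exact h ▸ hx.ne'
    · exact h ▸ hy.ne'
    · exact (hT _ h).1
  · by_contra hi'
    exact (hT _ (hinner i (by omega) (by omega))).2 h.symm
  · rintro (rfl | rfl)
    · exact hp0 ▸ hx.symm
    · exact hpm ▸ hy.symm

theorem IsChordal.exists_isSimplicialIn_of_not_adj (hG : G.IsChordal) {s : Finset V}
    (ih : ∀ t ⊂ s, ∀ K ⊆ (t : Set V), G.IsClique K → ∀ w ∈ t, w ∉ K →
      ∃ v ∈ t, v ∉ K ∧ G.IsSimplicialIn t v)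
    {u w : V} (hu : u ∈ s) (hw : w ∈ s) (hwu : w ≠ u) (huw : ¬G.Adj u w) :
    ∃ v ∈ s, v ≠ u ∧ ¬G.Adj u v ∧ G.IsSimplicialIn s v := by
  classical
  set T : Set V := {v | v ∈ s ∧ v ≠ u ∧ ¬G.Adj u v}
  set C : Set V := {v | (G.induce T).spanningCoe.Reachable w v}
  have hCT : C ⊆ T := fun v hv => Reachable.mem_of_spanningCoe_induce hv ⟨hw, hwu, huw⟩
  set t : Finset V := s.filter fun x => ∃ c ∈ C, x = c ∨ G.Adj c x
  have hts : t ⊂ s := by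
    refine (Finset.ssubset_iff_of_subset (Finset.filter_subset _ _)).2 ⟨u, hu, ?_⟩
    rintro hut
    obtain ⟨c, hc, rfl | hcu⟩ := (Finset.mem_filter.1 hut).2
    · exact (hCT hc).2.1 rfl
    · exact (hCT hc).2.2 hcu.symm
  have frontier : ∀ x ∈ t, x ∉ C → ∃ c ∈ C, G.Adj c x ∧ G.Adj u x := by
    intro x hxt hxC
    obtain ⟨hxs, c, hc, rfl | hcx⟩ := Finset.mem_filter.1 hxt
    · exact absurd hc hxC
    refine ⟨c, hc, hcx, ?_⟩
    by_contra hux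
    have hxu : x ≠ u := by rintro rfl; exact (hCT hc).2.2 hcx.symm
    exact hxC (hc.trans (spanningCoe_induce_adj.2 ⟨hcx, hCT hc, hxs, hxu, hux⟩).reachable)
  have hK : G.IsClique ((t : Set V) \ C) := by
    rintro x ⟨hxt, hxC⟩ y ⟨hyt, hyC⟩ hxy
    obtain ⟨cx, hcx, hcxx, hux⟩ := frontier x hxt hxC
    obtain ⟨cy, hcy, hcyy, huy⟩ := frontier y hyt hyC
    exact hG.adj_of_reachable (fun v hv => hv.2) hux huy hxy (hCT hcx) (hCT hcy) hcxx.symm hcyy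
      (hcx.symm.trans hcy)
  have hwt : w ∈ t := Finset.mem_filter.2 ⟨hw, w, Reachable.refl w, Or.inl rfl⟩
  obtain ⟨v, hvt, hvK, hv⟩ := ih t hts _ Set.sdiff_subset hK w hwt fun h => h.2 (Reachable.refl w)
  have hvC : v ∈ C := by_contra fun h => hvK ⟨hvt, h⟩
  obtain ⟨hvs, hvu, huv⟩ := hCT hvC
  refine ⟨v, hvs, hvu, huv, hv.subset ?_⟩
  rintro x ⟨hvx, hxs⟩
  exact ⟨hvx, Finset.mem_filter.2 ⟨hxs, v, hvC, Or.inr hvx⟩⟩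

theorem IsChordal.exists_isSimplicialIn_notMem (hG : G.IsChordal) (s : Finset V) :
    ∀ K ⊆ (s : Set V), G.IsClique K → ∀ w ∈ s, w ∉ K → ∃ v ∈ s, v ∉ K ∧ G.IsSimplicialIn s v := by
  induction s using Finset.strongInduction with
  | H s ih =>
  intro K hKs hK w hws hwK
  by_cases hu : ∃ u ∈ s, (∀ k ∈ K, k = u ∨ G.Adj u k) ∧ ∃ w' ∈ s, w' ≠ u ∧ ¬G.Adj u w'
  · obtain ⟨u, hus, huK, w', hw's, hw'u, huw'⟩ := hu
    obtain ⟨v, hvs, hvu, huv, hv⟩ := hG.exists_isSimplicialIn_of_not_adj ih hus hw's hw'u huw'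
    exact ⟨v, hvs, fun hvK => (huK v hvK).elim hvu huv, hv⟩
  · push Not at hu
    have hKuniv : ∀ k ∈ K, ∀ x ∈ s, x ≠ k → G.Adj k x := fun k hk =>
      hu k (hKs hk) fun k' hk' => or_iff_not_imp_left.2 fun h => hK hk hk' (Ne.symm h)
    have hs : G.IsClique (s : Set V) := fun x hx y _ hxy =>
      hu x hx (fun k hk => or_iff_not_imp_left.2 fun h => (hKuniv k hk x hx (Ne.symm h)).symm) y
        ‹_› hxy.symm
    exact ⟨w, hws, hwK, hs.subset Set.inter_subset_right⟩

theorem IsChordal.exists_isSimplicialIn (hG : G.IsChordal) {s : Finset V} (hs : s.Nonempty) :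
    ∃ v ∈ s, G.IsSimplicialIn s v := by
  obtain ⟨w, hw⟩ := hs
  obtain ⟨v, hvs, -, hv⟩ := hG.exists_isSimplicialIn_notMem s ∅ (Set.empty_subset _)
    isClique_empty w hw (Set.notMem_empty w)
  exact ⟨v, hvs, hv⟩

theorem exists_eliminationOrder_of_exists_isSimplicialIn
    (h : ∀ s : Finset V, s.Nonempty → ∃ v ∈ s, G.IsSimplicialIn s v) (n : ℕ) :
    ∀ s : Finset V, s.card = n → ∃ f : Fin n → V, Function.Injective f ∧ (∀ i, f i ∈ s) ∧
      ∀ i j k, i < j → i < k → j ≠ k → G.Adj (f i) (f j) → G.Adj (f i) (f k) →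
        G.Adj (f j) (f k) := by
  classical
  induction n with
  | zero => exact fun _ _ => ⟨Fin.elim0, fun i => i.elim0, fun i => i.elim0, fun i => i.elim0⟩
  | succ n ih =>
  intro s hs
  obtain ⟨v, hvs, hv⟩ := h s (Finset.card_pos.1 (by omega))
  obtain ⟨f, hf, hfs, hpeo⟩ := ih (s.erase v) (by rw [Finset.card_erase_of_mem hvs, hs]; rfl)
  refine ⟨Fin.cons v f, Fin.cons_injective_iff.2 ⟨?_, hf⟩,
    Fin.cases hvs fun i => Finset.mem_of_mem_erase (hfs i), ?_⟩
  · rintro ⟨i, hi⟩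
    exact Finset.notMem_erase v s (hi ▸ hfs i)
  · intro i j k hij hik hjk hj hk
    obtain ⟨j, rfl⟩ := Fin.exists_succ_eq.2 ((Fin.zero_le i).trans_lt hij).ne'
    obtain ⟨k, rfl⟩ := Fin.exists_succ_eq.2 ((Fin.zero_le i).trans_lt hik).ne'
    simp only [Fin.cons_succ] at hj hk ⊢
    cases i using Fin.cases with
    | zero =>
      exact hv ⟨hj, Finset.mem_of_mem_erase (hfs j)⟩ ⟨hk, Finset.mem_of_mem_erase (hfs k)⟩
        (hf.ne fun h => hjk (h ▸ rfl))
    | succ i =>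
      exact hpeo i j k (Fin.succ_lt_succ_iff.1 hij) (Fin.succ_lt_succ_iff.1 hik)
        (fun h => hjk (h ▸ rfl)) hj hk

end SimpleGraph

open SimpleGraph in
/-- a finite graph has a perfect elimination ordering iff it is chordal
(no induced cycles of length ≥ 4, i.e. every induced cycle is a triangle). -/
theorem stmt3 (V : Type*) [Fintype V] (G : SimpleGraph V) :
    (∃ e : Fin (Fintype.card V) ≃ V, IsPEO G e) ↔
      (∀ (k : ℕ) (c : Fin (k + 4) → V), Function.Injective c →
        (∀ s t, G.Adj (c s) (c t) ↔ (t = s + 1 ∨ s = t + 1)) → False) := by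
  refine ⟨fun ⟨e, he⟩ k c hinj hadj => he.isChordal k c ⟨hinj, hadj⟩, fun hG => ?_⟩
  have hG : G.IsChordal := fun k c hc => hG k c hc.1 hc.2
  obtain ⟨f, hf, -, hpeo⟩ :=
    exists_eliminationOrder_of_exists_isSimplicialIn (fun _ hs => hG.exists_isSimplicialIn hs)
      (Fintype.card V) Finset.univ rfl
  exact ⟨.ofBijective f ((Fintype.bijective_iff_injective_and_card f).2 ⟨hf, Fintype.card_fin _⟩),
    hpeo⟩
end

section
/- Let P = {x_1,...,x_n} be a finite poset whose comparability graph is connected, let d ≥ 2, and let ρ(C) = e_{i_1} + ... + e_{i_d} ∈ ℤ^n for a multichain C: x_{i_1} ≤ ... ≤ x_{i_d}. Then the lattice ℤA_P generated by the vectors ρ(C), as C ranges over all multichains of P of length d−1, equals { z ∈ ℤ^n : Σ z_i ∈ dℤ }. -/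
/-- The comparability graph of a poset. -/
def compGraph (α : Type*) [PartialOrder α] : SimpleGraph α where
  Adj a b := a ≠ b ∧ (a ≤ b ∨ b ≤ a)
  symm := ⟨fun _ _ h => ⟨h.1.symm, h.2.symm⟩⟩
  loopless := ⟨fun _ h => h.1 rfl⟩

/-- A multichain of length `d - 1`: a multiset of `d` pairwise comparable elements. -/
def IsMultichain {α : Type*} [PartialOrder α] (d : ℕ) (C : Multiset α) : Prop :=
  Multiset.card C = d ∧ ∀ a ∈ C, ∀ b ∈ C, a ≤ b ∨ b ≤ a

/-- `ρ(C)`: the integer vector of multiplicities of `C`. -/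
def rho {α : Type*} [DecidableEq α] (C : Multiset α) : α → ℤ :=
  fun a => (C.count a : ℤ)

section aux

variable {α : Type*} [Fintype α] [DecidableEq α] [PartialOrder α]

private def genSet (α : Type*) [DecidableEq α] [PartialOrder α] (d : ℕ) : Set (α → ℤ) :=
  { v | ∃ C : Multiset α, IsMultichain d C ∧ v = rho C }

private lemma replicate_mem (d : ℕ) (a : α) :
    rho (Multiset.replicate d a) ∈ genSet α d := by
  refine ⟨Multiset.replicate d a, ⟨Multiset.card_replicate _ _, ?_⟩, rfl⟩
  intro x hx y hy
  rw [Multiset.eq_of_mem_replicate hx, Multiset.eq_of_mem_replicate hy]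
  exact Or.inl le_rfl

private lemma diff_mem (d : ℕ) (hd : 2 ≤ d) {a b : α} (hab : a ≤ b) :
    (fun x => (if x = b then (1:ℤ) else 0) - (if x = a then 1 else 0)) ∈
      AddSubgroup.closure (genSet α d) := by
  have h1 : rho (a ::ₘ Multiset.replicate (d-1) b) ∈ AddSubgroup.closure (genSet α d) := by
    apply AddSubgroup.subset_closure
    refine ⟨_, ⟨?_, ?_⟩, rfl⟩
    · simp [Multiset.card_replicate]; omega
    · intro x hx y hy
      have hx' : x = a ∨ x = b := by
        rcases Multiset.mem_cons.1 hx with h | h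
        · exact Or.inl h
        · exact Or.inr (Multiset.eq_of_mem_replicate h)
      have hy' : y = a ∨ y = b := by
        rcases Multiset.mem_cons.1 hy with h | h
        · exact Or.inl h
        · exact Or.inr (Multiset.eq_of_mem_replicate h)
      rcases hx' with rfl | rfl <;> rcases hy' with rfl | rfl
      · exact Or.inl le_rfl
      · exact Or.inl hab
      · exact Or.inr hab
      · exact Or.inl le_rfl
  have h2 : rho (Multiset.replicate d b) ∈ AddSubgroup.closure (genSet α d) :=
    AddSubgroup.subset_closure (replicate_mem d b)
  have := (AddSubgroup.closure (genSet α d)).sub_mem h2 h1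
  convert this using 1
  funext x
  have hcast : ((d - 1 : ℕ) : ℤ) = (d : ℤ) - 1 := by omega
  simp only [Pi.sub_apply, rho, Multiset.count_replicate, Multiset.count_cons]
  rcases eq_or_ne x b with rfl | hxb <;> rcases eq_or_ne x a with rfl | hxa <;>
      push_cast [Multiset.count_replicate, hcast]
  · simp <;> ring
  · simp [hxa, Ne.symm hxa] <;> ring
  · simp [hxb, Ne.symm hxb] <;> ring
  · simp [hxa, hxb, Ne.symm hxa, Ne.symm hxb] <;> ring

private lemma diff_mem_of_walk (d : ℕ) (hd : 2 ≤ d) {a b : α}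
    (p : (compGraph α).Walk a b) :
    (fun x => (if x = b then (1:ℤ) else 0) - (if x = a then 1 else 0)) ∈
      AddSubgroup.closure (genSet α d) := by
  induction p with
  | nil => simp only [sub_self]; exact (AddSubgroup.closure (genSet α d)).zero_mem
  | @cons u v w huv _ ih =>
      have h1 : (fun x => (if x = v then (1:ℤ) else 0) - (if x = u then 1 else 0)) ∈
          AddSubgroup.closure (genSet α d) := by
        rcases huv.2 with h | h
        · exact diff_mem d hd h
        · have h2 := diff_mem d hd h
          have h3 := (AddSubgroup.closure (genSet α d)).neg_mem h2
          convert h3 using 1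
          funext x; simp
      have := (AddSubgroup.closure (genSet α d)).add_mem h1 ih
      convert this using 1
      funext x; simp only [Pi.add_apply]; ring

private lemma diff_mem_of_reachable (d : ℕ) (hd : 2 ≤ d) {a b : α}
    (h : (compGraph α).Reachable a b) :
    (fun x => (if x = b then (1:ℤ) else 0) - (if x = a then 1 else 0)) ∈
      AddSubgroup.closure (genSet α d) :=
  diff_mem_of_walk d hd h.some

end aux

/-- if the comparability graph of a finite poset is connected and `d ≥ 2`,
the lattice generated by the vectors `ρ(C)` of multichains of length `d-1` is exactly
the set of integer vectors whose coordinate sum is divisible by `d`. -/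
theorem stmt5 (α : Type*) [Fintype α] [DecidableEq α] [PartialOrder α]
    (d : ℕ) (hd : 2 ≤ d) (hconn : (compGraph α).Connected) (z : α → ℤ) :
    z ∈ AddSubgroup.closure { v | ∃ C : Multiset α, IsMultichain d C ∧ v = rho C } ↔
      (d : ℤ) ∣ ∑ a, z a := by
  have hne : Nonempty α := hconn.nonempty
  obtain ⟨a0⟩ := hne
  constructor
  · intro hz
    -- sum homomorphism
    let φ : (α → ℤ) →+ ℤ := AddMonoidHom.mk' (fun w => ∑ a, w a)
      (by intro x y; simp [Finset.sum_add_distrib])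
    have : AddSubgroup.closure (genSet α d) ≤
        AddSubgroup.comap φ (AddSubgroup.zmultiples (d : ℤ)) := by
      rw [AddSubgroup.closure_le]
      rintro v ⟨C, ⟨hcard, -⟩, rfl⟩
      simp only [AddSubgroup.coe_comap, Set.mem_preimage, SetLike.mem_coe,
        Int.mem_zmultiples_iff]
      refine ⟨1, ?_⟩
      have : (φ (rho C) : ℤ) = ∑ a, (C.count a : ℤ) := rfl
      rw [this]
      push_cast [← Nat.cast_sum]
      rw [Multiset.sum_count_eq_card (fun a _ => Finset.mem_univ a), hcard]; ring
    have := this hz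
    simpa [Int.mem_zmultiples_iff, dvd_def, eq_comm, mul_comm, φ] using this
  · rintro ⟨k, hk⟩
    have hrep : ∀ a : α, rho (Multiset.replicate d a) ∈ AddSubgroup.closure (genSet α d) :=
      fun a => AddSubgroup.subset_closure (replicate_mem d a)
    have key : z = (∑ a : α, z a • (fun x => (if x = a then (1:ℤ) else 0) -
        (if x = a0 then 1 else 0))) + k • rho (Multiset.replicate d a0) := by
      funext x
      simp only [Pi.add_apply, Finset.sum_apply, Pi.smul_apply, smul_eq_mul, rho,
        Multiset.count_replicate]
      rw [show (∑ a : α, z a * ((if x = a then (1:ℤ) else 0) - (if x = a0 then 1 else 0)))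
          = (∑ a : α, z a * (if x = a then (1:ℤ) else 0))
            - (∑ a : α, z a) * (if x = a0 then 1 else 0) by
        rw [Finset.sum_mul, ← Finset.sum_sub_distrib]; congr 1; funext a; ring]
      rw [hk]
      by_cases hx : x = a0 <;> simp [hx, Ne.symm, mul_ite, mul_comm]
    rw [key]
    refine (AddSubgroup.closure (genSet α d)).add_mem ?_
      (AddSubgroup.zsmul_mem _ (hrep a0) k)
    refine AddSubgroup.sum_mem _ fun a _ => AddSubgroup.zsmul_mem _ ?_ (z a)
    exact diff_mem_of_reachable d hd (hconn a0 a)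
end

section
/- Let P be a finite poset with connected comparability graph, d ≥ 2, and suppose x_j and x_k are two incomparable elements of P. Then the vector (d−1)e_j + e_k lies in ℤA_P ∩ ℚ_{≥0}A_P but not in the monoid ℤ_{≥0}A_P generated by the vectors ρ(C). In particular, the monoid ℤ_{≥0}A_P is not normal (not saturated in ℤA_P). -/
/-- `ρ(C)` as a rational vector. -/
def rhoQ {α : Type*} [DecidableEq α] (C : Multiset α) : α → ℚ :=
  fun a => (C.count a : ℚ)

/-- The rational cone `ℚ_{≥0} A_P` generated by the vectors `ρ(C)`. -/
def coneQ (α : Type*) [Fintype α] [DecidableEq α] [PartialOrder α] (d : ℕ) :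
    Set (α → ℚ) :=
  { q | ∃ (m : ℕ) (C : Fin m → Multiset α) (c : Fin m → ℚ),
      (∀ k, IsMultichain d (C k) ∧ 0 ≤ c k) ∧ q = ∑ k, c k • rhoQ (C k) }

theorem AddSubmonoid.mem_of_mem_closure_of_map_eq {M : Type*} [AddCommMonoid M] {S : Set M}
    (φ : M →+ ℤ) {d : ℤ} (hd : d ≠ 0) (hS : ∀ s ∈ S, φ s = d) {z : M}
    (hz : z ∈ AddSubmonoid.closure S) (hφz : φ z = d) : z ∈ S := by
  obtain ⟨l, hlS, rfl⟩ := AddSubmonoid.exists_list_of_mem_closure hz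
  have hφl : φ l.sum = l.length • d := by
    rw [map_list_sum, List.sum_eq_card_nsmul _ d (by simpa using fun s hs => hS s (hlS s hs)),
      List.length_map]
  have hlen : l.length = 1 := by
    rw [hφz, nsmul_eq_mul] at hφl
    exact_mod_cast mul_right_cancel₀ hd (hφl.symm.trans (one_mul d).symm)
  obtain ⟨s, rfl⟩ := List.length_eq_one_iff.mp hlen
  simpa using hlS s (by simp)

theorem SimpleGraph.Reachable.sub_mem {V G : Type*} [AddGroup G] {Γ : SimpleGraph V}
    {H : AddSubgroup G} {f : V → G} (hadj : ∀ x y, Γ.Adj x y → f x - f y ∈ H) {x y : V}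
    (hxy : Γ.Reachable x y) : f x - f y ∈ H := by
  obtain ⟨w⟩ := hxy
  induction w with
  | nil => simp
  | cons h _ ih => simpa using H.add_mem (hadj _ _ h) ih

section Rho

variable {α : Type*} [DecidableEq α]

theorem rho_injective : Function.Injective (rho : Multiset α → α → ℤ) := fun _ _ h =>
  Multiset.ext.2 fun x => Nat.cast_injective (congrFun h x)

theorem rho_cons (y : α) (C : Multiset α) : rho (y ::ₘ C) = Pi.single y 1 + rho C := by
  funext t
  simp only [rho, Multiset.count_cons, Pi.add_apply, Pi.single_apply]
  push_cast
  ring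

theorem rho_replicate (n : ℕ) (x : α) :
    rho (Multiset.replicate n x) = (n : ℤ) • Pi.single x 1 := by
  induction n with
  | zero => funext t; simp [rho]
  | succ n ih => rw [Multiset.replicate_succ, rho_cons, ih]; push_cast; module

theorem rhoQ_replicate (n : ℕ) (x : α) :
    rhoQ (Multiset.replicate n x) = (n : ℚ) • Pi.single x 1 := by
  funext t
  simp [rhoQ, Multiset.count_replicate, Pi.single_apply, eq_comm]

theorem sum_rho [Fintype α] (C : Multiset α) : ∑ x, rho C x = Multiset.card C := by
  simp [rho, ← Nat.cast_sum]

end Rho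

def multichainVectors (α : Type*) [DecidableEq α] [PartialOrder α] (d : ℕ) : Set (α → ℤ) :=
  { v | ∃ C : Multiset α, IsMultichain d C ∧ v = rho C }

theorem rho_mem_multichainVectors {α : Type*} [DecidableEq α] [PartialOrder α] {d : ℕ}
    {C : Multiset α} (hC : IsMultichain d C) : rho C ∈ multichainVectors α d :=
  ⟨C, hC, rfl⟩

theorem isMultichain_cons_replicate {α : Type*} [PartialOrder α] (n : ℕ) {x y : α}
    (h : x ≤ y ∨ y ≤ x) : IsMultichain (n + 1) (y ::ₘ Multiset.replicate n x) := by
  refine ⟨by simp, ?_⟩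
  have hmem : ∀ p ∈ y ::ₘ Multiset.replicate n x, p = y ∨ p = x := fun p hp => by
    rcases Multiset.mem_cons.mp hp with h | h
    exacts [.inl h, .inr (Multiset.eq_of_mem_replicate h)]
  intro p hp q hq
  rcases hmem p hp with rfl | rfl <;> rcases hmem q hq with rfl | rfl <;> tauto

theorem single_sub_single_mem_closure_rho {α : Type*} [DecidableEq α] [PartialOrder α] (n : ℕ)
    {x y : α} (h : x ≤ y ∨ y ≤ x) :
    Pi.single x 1 - Pi.single y 1 ∈
      AddSubgroup.closure (multichainVectors α (n + 1)) := by
  have hx := AddSubgroup.subset_closure <|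
    rho_mem_multichainVectors (isMultichain_cons_replicate n (Or.inl (le_refl x)))
  have hy := AddSubgroup.subset_closure <|
    rho_mem_multichainVectors (isMultichain_cons_replicate n h)
  simpa [rho_cons] using sub_mem hx hy

theorem rho_cons_replicate_mem_closure {α : Type*} [DecidableEq α] [PartialOrder α]
    (hconn : (compGraph α).Connected) (n : ℕ) (x y : α) :
    rho (y ::ₘ Multiset.replicate n x) ∈ AddSubgroup.closure (multichainVectors α (n + 1)) := by
  have hxy := (hconn x y).sub_mem (f := fun t : α => (Pi.single t 1 : α → ℤ)) fun s t hst =>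
    single_sub_single_mem_closure_rho n (show s ≠ t ∧ (s ≤ t ∨ t ≤ s) from hst).2
  have hx := AddSubgroup.subset_closure <|
    rho_mem_multichainVectors (isMultichain_cons_replicate n (Or.inl (le_refl x)))
  convert sub_mem hx hxy using 1
  rw [rho_cons, rho_cons]
  abel

theorem rho_cons_replicate_mem_coneQ {α : Type*} [Fintype α] [DecidableEq α] [PartialOrder α]
    (n : ℕ) (x y : α) :
    (fun t => (rho (y ::ₘ Multiset.replicate n x) t : ℚ)) ∈ coneQ α (n + 1) := by
  refine ⟨2, ![Multiset.replicate (n + 1) x, Multiset.replicate (n + 1) y],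
    ![n / (n + 1), 1 / (n + 1)], fun k => ?_, ?_⟩
  · fin_cases k <;> exact ⟨isMultichain_cons_replicate n (Or.inl le_rfl), by simp; positivity⟩
  · funext t
    simp only [Fin.sum_univ_two, Matrix.cons_val_zero, Matrix.cons_val_one, rhoQ_replicate,
      smul_smul, rho_cons, rho_replicate]
    have hn : (n + 1 : ℚ) ≠ 0 := by positivity
    simp [Pi.single_apply, hn, add_comm]

theorem isMultichain_of_rho_mem_closure {α : Type*} [Fintype α] [DecidableEq α]
    [PartialOrder α] {d : ℕ} (hd : d ≠ 0) {C : Multiset α} (hC : Multiset.card C = d)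
    (h : rho C ∈ AddSubmonoid.closure (multichainVectors α d)) : IsMultichain d C := by
  obtain ⟨D, hD, hDC⟩ := AddSubmonoid.mem_of_mem_closure_of_map_eq
    (AddMonoidHom.mk' (fun z : α → ℤ => ∑ t, z t) fun _ _ => Finset.sum_add_distrib)
    (d := d) (by exact_mod_cast hd) (by rintro _ ⟨D, hD, rfl⟩; simp [sum_rho, hD.1]) h
    (by simp [sum_rho, hC])
  rwa [← rho_injective hDC] at hD

theorem stmt7_general (α : Type*) [Fintype α] [DecidableEq α] [PartialOrder α]
    (d : ℕ) (hd : 2 ≤ d) (hconn : (compGraph α).Connected)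
    (a b : α) (hinc : ¬ (a ≤ b ∨ b ≤ a)) :
    ((d - 1 : ℤ) • Pi.single a 1 + Pi.single b 1 ∈
        AddSubgroup.closure { v | ∃ C : Multiset α, IsMultichain d C ∧ v = rho C }) ∧
    ((fun x => (((d - 1 : ℤ) • Pi.single a 1 + Pi.single b 1 : α → ℤ) x : ℚ)) ∈
        coneQ α d) ∧
    ((d - 1 : ℤ) • Pi.single a 1 + Pi.single b 1 ∉
        AddSubmonoid.closure { v | ∃ C : Multiset α, IsMultichain d C ∧ v = rho C }) ∧
    ¬ (∀ z : α → ℤ,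
        z ∈ AddSubmonoid.closure { v | ∃ C : Multiset α, IsMultichain d C ∧ v = rho C } ↔
        (z ∈ AddSubgroup.closure { v | ∃ C : Multiset α, IsMultichain d C ∧ v = rho C } ∧
          (fun x => (z x : ℚ)) ∈ coneQ α d)) := by
  obtain ⟨n, rfl⟩ : ∃ n, d = n + 1 := ⟨d - 1, by omega⟩
  have hv : ((n + 1 : ℕ) - 1 : ℤ) • Pi.single a 1 + Pi.single b 1 =
      rho (b ::ₘ Multiset.replicate n a) := by
    rw [rho_cons, rho_replicate]; push_cast; module
  rw [hv]
  have hgroup := rho_cons_replicate_mem_closure hconn n a b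
  have hcone := rho_cons_replicate_mem_coneQ n a b
  have hmonoid : rho (b ::ₘ Multiset.replicate n a) ∉
      AddSubmonoid.closure (multichainVectors α (n + 1)) := fun hmem =>
    have hC := isMultichain_of_rho_mem_closure n.succ_ne_zero (by simp) hmem
    hinc (hC.2 a (Multiset.mem_cons_of_mem (Multiset.mem_replicate.2 ⟨by omega, rfl⟩)) b
      (Multiset.mem_cons_self b _))
  exact ⟨hgroup, hcone, hmonoid, fun h => hmonoid ((h _).2 ⟨hgroup, hcone⟩)⟩

/-- for incomparable `a`, `b` in a poset with connected comparability graph,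
`(d-1)e_a + e_b` lies in `ℤA_P ∩ ℚ_{≥0}A_P` but not in `ℤ_{≥0}A_P`; in particular the
monoid `ℤ_{≥0}A_P` is not normal. -/
theorem stmt7 (α : Type*) [Fintype α] [DecidableEq α] [PartialOrder α]
    (d : ℕ) (hd : 2 ≤ d) (hconn : (compGraph α).Connected)
    (a b : α) (hab : a ≠ b) (hinc : ¬ (a ≤ b ∨ b ≤ a)) :
    ((d - 1 : ℤ) • Pi.single a 1 + Pi.single b 1 ∈
        AddSubgroup.closure { v | ∃ C : Multiset α, IsMultichain d C ∧ v = rho C }) ∧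
    ((fun x => (((d - 1 : ℤ) • Pi.single a 1 + Pi.single b 1 : α → ℤ) x : ℚ)) ∈
        coneQ α d) ∧
    ((d - 1 : ℤ) • Pi.single a 1 + Pi.single b 1 ∉
        AddSubmonoid.closure { v | ∃ C : Multiset α, IsMultichain d C ∧ v = rho C }) ∧
    ¬ (∀ z : α → ℤ,
        z ∈ AddSubmonoid.closure { v | ∃ C : Multiset α, IsMultichain d C ∧ v = rho C } ↔
        (z ∈ AddSubgroup.closure { v | ∃ C : Multiset α, IsMultichain d C ∧ v = rho C } ∧
          (fun x => (z x : ℚ)) ∈ coneQ α d)) :=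
  stmt7_general α d hd hconn a b hinc
end

section
/- Let G be a finite simple graph containing an induced cycle C = (v_1, v_2, ..., v_{2ℓ+1}) of odd length 2ℓ+1 ≥ 5. Consider the vectors a_e = e_u + e_v for edges {u,v} of G together with the vectors 2e_v for each vertex v. Then the identity (e_1 + e_{2ℓ+1}) + Σ_{k=1}^{ℓ}(e_{2k−1} + e_{2k}) = 2e_1 + Σ_{k=1}^{ℓ}(e_{2k} + e_{2k+1}) holds, the two multisets of summands are disjoint, and no sum of two vectors from the left side equals a sum of two vectors from the configuration other than itself: i.e., for any two summands a, a' from the left side and any vectors b, b' in the configuration, a + a' = b + b' implies {a, a'} = {b, b'}. -/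
/-- The standard basis vector `e_a` of `ℤ^V`. -/
def ev {V : Type*} [DecidableEq V] (a : V) : V → ℤ := Pi.single a 1

/-!
Write a configuration vector as `e_x + e_y` with `x = y` or `x ~ y`. Coordinates count
multiplicities, so `b + b' = e_p + e_q + e_r + e_s` forces `{b, b'}` to re-pair the four
vertices `p, q, r, s`. For two distinct left summands `{p, q}`, `{r, s}`, a cross re-pairing
into two configuration vectors would close a 4-cycle on the induced cycle of length `≥ 5`;
the only exception is the pair `{v₀, v₂ₗ}`, `{v₀, v₁}` sharing `v₀`, where one cross re-pairing
returns the same two summands and the other needs the non-edge `{v₁, v₂ₗ}`. The sum identity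
is a telescoping sum.
-/

open Relation

section Vectors

variable {V : Type*} [DecidableEq V]

lemma ev_apply (a x : V) : ev a x = if x = a then 1 else 0 := Pi.single_apply a 1 x

lemma ev_nonneg (a : V) : 0 ≤ ev a := Pi.single_nonneg.mpr zero_le_one

lemma ev_injective : Function.Injective (ev : V → V → ℤ) := fun a b h => by
  simpa [ev_apply] using congrFun h a

lemma mem_of_ev_add_eq_sum {x : V} {w : V → ℤ} (hw : 0 ≤ w) {l : List V}
    (h : ev x + w = (l.map ev).sum) : x ∈ l := by
  by_contra hx
  have hl : (l.map ev).sum x = 0 := by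
    rw [Pi.list_sum_apply, List.map_map]
    refine List.sum_eq_zero fun _ hm => ?_
    obtain ⟨a, ha, rfl⟩ := List.mem_map.mp hm
    show ev a x = 0
    rw [ev_apply, if_neg]
    rintro rfl
    exact hx ha
  have hx := congrFun h x
  simp only [Pi.add_apply, ev_apply, if_pos, hl] at hx
  linarith [show 0 ≤ w x from hw x]

lemma eq_and_eq_or_of_ev_add_ev_eq {a b c d : V} (h : ev a + ev b = ev c + ev d) :
    (a = c ∧ b = d) ∨ (a = d ∧ b = c) := by
  have ha : a ∈ [c, d] := mem_of_ev_add_eq_sum (ev_nonneg b) (by simpa using h)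
  simp only [List.mem_cons, List.not_mem_nil, or_false] at ha
  rcases ha with rfl | rfl
  · exact .inl ⟨rfl, ev_injective (add_left_cancel h)⟩
  · exact .inr ⟨rfl, ev_injective (add_left_cancel (h.trans (add_comm _ _)))⟩

lemma pair_eq_of_ev_add_ev_add_eq {x y x' y' p q r s : V}
    (h : ev x + ev y + (ev x' + ev y') = ev p + ev q + (ev r + ev s)) :
    ({ev x + ev y, ev x' + ev y'} : Multiset (V → ℤ)) = {ev p + ev q, ev r + ev s} ∨
    ({ev x + ev y, ev x' + ev y'} : Multiset (V → ℤ)) = {ev p + ev r, ev q + ev s} ∨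
    ({ev x + ev y, ev x' + ev y'} : Multiset (V → ℤ)) = {ev p + ev s, ev q + ev r} := by
  have hw' : 0 ≤ ev x' + ev y' := add_nonneg (ev_nonneg x') (ev_nonneg y')
  have hx : x ∈ [p, q, r, s] := mem_of_ev_add_eq_sum (add_nonneg (ev_nonneg y) hw') <| by
    simp only [List.map, List.sum_cons, List.sum_nil]
    linear_combination h
  have hy {a b c : V} (he : ev y + (ev x' + ev y') = ev a + (ev b + ev c)) :
      y = a ∨ y = b ∨ y = c := by
    simpa using mem_of_ev_add_eq_sum (l := [a, b, c]) hw' (by simpa using he)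
  simp only [List.mem_cons, List.not_mem_nil, or_false] at hx
  rcases hx with rfl | rfl | rfl | rfl
  · rcases hy (a := q) (b := r) (c := s) (by linear_combination h) with rfl | rfl | rfl <;>
      grind [Multiset.pair_comm]
  · rcases hy (a := p) (b := r) (c := s) (by linear_combination h) with rfl | rfl | rfl <;>
      grind [Multiset.pair_comm]
  · rcases hy (a := p) (b := q) (c := s) (by linear_combination h) with rfl | rfl | rfl <;>
      grind [Multiset.pair_comm]
  · rcases hy (a := p) (b := q) (c := r) (by linear_combination h) with rfl | rfl | rfl <;>
      grind [Multiset.pair_comm]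

end Vectors

namespace SimpleGraph

variable {V : Type*} [DecidableEq V] (G : SimpleGraph V)

def configuration : Set (V → ℤ) :=
  {w | (∃ x y, G.Adj x y ∧ w = ev x + ev y) ∨ ∃ x, w = (2 : ℤ) • ev x}

variable {G}

lemma exists_eq_ev_add_ev_of_mem_configuration {w : V → ℤ} (hw : w ∈ G.configuration) :
    ∃ x y, w = ev x + ev y := by
  rcases hw with ⟨x, y, -, rfl⟩ | ⟨x, rfl⟩
  exacts [⟨x, y, rfl⟩, ⟨x, x, two_smul ℤ (ev x)⟩]

lemma reflGen_adj_of_ev_add_ev_mem_configuration {x y : V}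
    (h : ev x + ev y ∈ G.configuration) : ReflGen G.Adj x y := by
  rcases h with ⟨x', y', hadj, h⟩ | ⟨z, h⟩
  · rcases eq_and_eq_or_of_ev_add_ev_eq h with ⟨rfl, rfl⟩ | ⟨rfl, rfl⟩
    exacts [.single hadj, .single hadj.symm]
  · rw [two_smul] at h
    obtain ⟨rfl, rfl⟩ | ⟨rfl, rfl⟩ := eq_and_eq_or_of_ev_add_ev_eq h <;> rfl

/-- `hpr` and `hps` say that a cross re-pairing of `{p, q}, {r, s}` into two configuration
vectors gives back `e_p + e_q` and `e_r + e_s`. -/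
theorem pair_eq_of_add_eq_add {p q r s : V} {b b' : V → ℤ} (hb : b ∈ G.configuration)
    (hb' : b' ∈ G.configuration) (h : b + b' = ev p + ev q + (ev r + ev s))
    (hpr : ReflGen G.Adj p r → ReflGen G.Adj q s → p = s ∨ q = r)
    (hps : ReflGen G.Adj p s → ReflGen G.Adj q r → p = r ∨ q = s) :
    ({ev p + ev q, ev r + ev s} : Multiset (V → ℤ)) = {b, b'} := by
  have hmem : ∀ w ∈ ({b, b'} : Multiset (V → ℤ)), w ∈ G.configuration := by
    simp only [Multiset.insert_eq_cons, Multiset.mem_cons, Multiset.mem_singleton]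
    rintro w (rfl | rfl) <;> assumption
  obtain ⟨x, y, rfl⟩ := exists_eq_ev_add_ev_of_mem_configuration hb
  obtain ⟨x', y', rfl⟩ := exists_eq_ev_add_ev_of_mem_configuration hb'
  rcases pair_eq_of_ev_add_ev_add_eq h with h₁ | h₂ | h₃
  · exact h₁.symm
  · rw [h₂] at hmem ⊢
    rcases hpr (reflGen_adj_of_ev_add_ev_mem_configuration (hmem _ (by simp)))
      (reflGen_adj_of_ev_add_ev_mem_configuration (hmem _ (by simp))) with rfl | rfl <;>
      grind [Multiset.pair_comm]
  · rw [h₃] at hmem ⊢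
    rcases hps (reflGen_adj_of_ev_add_ev_mem_configuration (hmem _ (by simp)))
      (reflGen_adj_of_ev_add_ev_mem_configuration (hmem _ (by simp))) with rfl | rfl <;>
      grind [Multiset.pair_comm]

end SimpleGraph

def cycleAdj (ℓ s t : ℕ) : Prop :=
  t = s + 1 ∨ s = t + 1 ∨ (s = 0 ∧ t = 2 * ℓ) ∨ (t = 0 ∧ s = 2 * ℓ)

def IsLeftPair (ℓ i j : ℕ) : Prop := (i = 0 ∧ j = 2 * ℓ) ∨ ∃ k < ℓ, i = 2 * k ∧ j = 2 * k + 1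

def IsRightPair (ℓ i j : ℕ) : Prop := (i = 0 ∧ j = 0) ∨ ∃ k < ℓ, i = 2 * k + 1 ∧ j = 2 * k + 2

lemma IsLeftPair.lt {ℓ i j : ℕ} (h : IsLeftPair ℓ i j) : i < 2 * ℓ + 1 ∧ j < 2 * ℓ + 1 := by
  rcases h with ⟨rfl, rfl⟩ | ⟨k, hk, rfl, rfl⟩ <;> omega

lemma IsRightPair.lt {ℓ i j : ℕ} (h : IsRightPair ℓ i j) : i < 2 * ℓ + 1 ∧ j < 2 * ℓ + 1 := by
  rcases h with ⟨rfl, rfl⟩ | ⟨k, hk, rfl, rfl⟩ <;> omega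

lemma IsLeftPair.not_eq_isRightPair {ℓ i j i' j' : ℕ} (hℓ : 0 < ℓ) (h : IsLeftPair ℓ i j)
    (h' : IsRightPair ℓ i' j') : ¬((i = i' ∧ j = j') ∨ (i = j' ∧ j = i')) := by
  rcases h with ⟨rfl, rfl⟩ | ⟨k, hk, rfl, rfl⟩ <;>
    rcases h' with ⟨rfl, rfl⟩ | ⟨k', hk', rfl, rfl⟩ <;> omega

/-- A cycle of length `≥ 5` has no 4-cycle, so two distinct left pairs are joined crosswise
only through the vertex `0` shared by `{0, 2ℓ}` and `{0, 1}`. -/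
lemma IsLeftPair.eq_of_reflGen_cross {ℓ p q r s : ℕ} (hℓ : 2 ≤ ℓ) (hpq : IsLeftPair ℓ p q)
    (hrs : IsLeftPair ℓ r s) (hne : p ≠ r ∨ q ≠ s) :
    (ReflGen (cycleAdj ℓ) p r → ReflGen (cycleAdj ℓ) q s → p = s ∨ q = r) ∧
    (ReflGen (cycleAdj ℓ) p s → ReflGen (cycleAdj ℓ) q r → p = r ∨ q = s) := by
  simp only [reflGen_iff, cycleAdj]
  rcases hpq with ⟨rfl, rfl⟩ | ⟨k, hk, rfl, rfl⟩ <;>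
    rcases hrs with ⟨rfl, rfl⟩ | ⟨j, hj, rfl, rfl⟩ <;> omega

section OddCycle

variable {V : Type*} [DecidableEq V] (v : ℕ → V) (ℓ : ℕ)

def leftSummands : Multiset (V → ℤ) :=
  (ev (v 0) + ev (v (2 * ℓ))) ::ₘ
    (Multiset.range ℓ).map (fun k => ev (v (2 * k)) + ev (v (2 * k + 1)))

def rightSummands : Multiset (V → ℤ) :=
  ((2 : ℤ) • ev (v 0)) ::ₘ
    (Multiset.range ℓ).map (fun k => ev (v (2 * k + 1)) + ev (v (2 * k + 2)))

theorem sum_leftSummands : (leftSummands v ℓ).sum = (rightSummands v ℓ).sum := by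
  have telescope : ∑ k ∈ Finset.range ℓ, ev (v (2 * k)) + ev (v (2 * ℓ)) =
      ev (v 0) + ∑ k ∈ Finset.range ℓ, ev (v (2 * k + 2)) := by
    rw [← Finset.sum_range_succ (fun k => ev (v (2 * k))), Finset.sum_range_succ']
    exact add_comm _ _
  change ev (v 0) + ev (v (2 * ℓ)) + ∑ k ∈ Finset.range ℓ, (ev (v (2 * k)) + ev (v (2 * k + 1))) =
    (2 : ℤ) • ev (v 0) + ∑ k ∈ Finset.range ℓ, (ev (v (2 * k + 1)) + ev (v (2 * k + 2)))
  rw [Finset.sum_add_distrib, Finset.sum_add_distrib, two_smul]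
  linear_combination telescope

variable {v ℓ}

lemma exists_isLeftPair_of_mem_leftSummands {a : V → ℤ} (ha : a ∈ leftSummands v ℓ) :
    ∃ i j, IsLeftPair ℓ i j ∧ a = ev (v i) + ev (v j) := by
  simp only [leftSummands, Multiset.mem_cons, Multiset.mem_map, Multiset.mem_range] at ha
  rcases ha with rfl | ⟨k, hk, rfl⟩
  exacts [⟨0, 2 * ℓ, .inl ⟨rfl, rfl⟩, rfl⟩, ⟨2 * k, 2 * k + 1, .inr ⟨k, hk, rfl, rfl⟩, rfl⟩]

lemma exists_isRightPair_of_mem_rightSummands {a : V → ℤ} (ha : a ∈ rightSummands v ℓ) :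
    ∃ i j, IsRightPair ℓ i j ∧ a = ev (v i) + ev (v j) := by
  simp only [rightSummands, Multiset.mem_cons, Multiset.mem_map, Multiset.mem_range] at ha
  rcases ha with rfl | ⟨k, hk, rfl⟩
  exacts [⟨0, 0, .inl ⟨rfl, rfl⟩, two_smul ℤ _⟩,
    ⟨2 * k + 1, 2 * k + 2, .inr ⟨k, hk, rfl, rfl⟩, rfl⟩]

lemma index_eq_of_ev_add_ev_eq (hinj : Set.InjOn v (Set.Iio (2 * ℓ + 1))) {i j i' j' : ℕ}
    (hi : i < 2 * ℓ + 1) (hj : j < 2 * ℓ + 1) (hi' : i' < 2 * ℓ + 1) (hj' : j' < 2 * ℓ + 1)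
    (h : ev (v i) + ev (v j) = ev (v i') + ev (v j')) : (i = i' ∧ j = j') ∨ (i = j' ∧ j = i') := by
  rcases eq_and_eq_or_of_ev_add_ev_eq h with ⟨h₁, h₂⟩ | ⟨h₁, h₂⟩
  exacts [.inl ⟨hinj hi hi' h₁, hinj hj hj' h₂⟩, .inr ⟨hinj hi hj' h₁, hinj hj hi' h₂⟩]

theorem nodup_leftSummands (hinj : Set.InjOn v (Set.Iio (2 * ℓ + 1))) :
    (leftSummands v ℓ).Nodup := by
  refine Multiset.nodup_cons.mpr ⟨fun hmem => ?_, (Multiset.nodup_range ℓ).map_on ?_⟩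
  · obtain ⟨k, hk, h⟩ := Multiset.mem_map.mp hmem
    have hk := Multiset.mem_range.mp hk
    have := index_eq_of_ev_add_ev_eq hinj (by omega) (by omega) (by omega) (by omega) h
    omega
  · intro k hk k' hk' h
    have hk := Multiset.mem_range.mp hk
    have hk' := Multiset.mem_range.mp hk'
    have := index_eq_of_ev_add_ev_eq hinj (by omega) (by omega) (by omega) (by omega) h
    omega

theorem disjoint_leftSummands_rightSummands (hℓ : 0 < ℓ)
    (hinj : Set.InjOn v (Set.Iio (2 * ℓ + 1))) :
    Disjoint (leftSummands v ℓ) (rightSummands v ℓ) := by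
  refine Multiset.disjoint_left.mpr fun haL haR => ?_
  obtain ⟨i, j, hij, rfl⟩ := exists_isLeftPair_of_mem_leftSummands haL
  obtain ⟨i', j', hij', h⟩ := exists_isRightPair_of_mem_rightSummands haR
  exact hij.not_eq_isRightPair hℓ hij' (index_eq_of_ev_add_ev_eq hinj hij.lt.1 hij.lt.2
    hij'.lt.1 hij'.lt.2 h)

theorem pair_eq_of_pair_le_leftSummands {G : SimpleGraph V} (hℓ : 2 ≤ ℓ)
    (hinj : Set.InjOn v (Set.Iio (2 * ℓ + 1)))
    (hind : ∀ s < 2 * ℓ + 1, ∀ t < 2 * ℓ + 1, G.Adj (v s) (v t) ↔ cycleAdj ℓ s t)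
    {a a' b b' : V → ℤ} (hle : ({a, a'} : Multiset (V → ℤ)) ≤ leftSummands v ℓ)
    (hb : b ∈ G.configuration) (hb' : b' ∈ G.configuration) (h : a + a' = b + b') :
    ({a, a'} : Multiset (V → ℤ)) = {b, b'} := by
  have hne : a ≠ a' := by simpa using Multiset.nodup_of_le hle (nodup_leftSummands hinj)
  obtain ⟨p, q, hpq, rfl⟩ :=
    exists_isLeftPair_of_mem_leftSummands (a := a) (Multiset.mem_of_le hle (by simp))
  obtain ⟨r, s, hrs, rfl⟩ :=
    exists_isLeftPair_of_mem_leftSummands (a := a') (Multiset.mem_of_le hle (by simp))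
  have hadj {i j : ℕ} (hi : i < 2 * ℓ + 1) (hj : j < 2 * ℓ + 1) (h : ReflGen G.Adj (v i) (v j)) :
      ReflGen (cycleAdj ℓ) i j := by
    rw [reflGen_iff] at h ⊢
    exact h.imp (hinj hj hi) (hind i hi j hj).mp
  have hcross := hpq.eq_of_reflGen_cross hℓ hrs (by contrapose! hne; rw [hne.1, hne.2])
  refine G.pair_eq_of_add_eq_add hb hb' h.symm (fun h₁ h₂ => ?_) (fun h₁ h₂ => ?_)
  · rcases hcross.1 (hadj hpq.lt.1 hrs.lt.1 h₁) (hadj hpq.lt.2 hrs.lt.2 h₂) with rfl | rfl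
    exacts [.inl rfl, .inr rfl]
  · rcases hcross.2 (hadj hpq.lt.1 hrs.lt.2 h₁) (hadj hpq.lt.2 hrs.lt.1 h₂) with rfl | rfl
    exacts [.inl rfl, .inr rfl]

end OddCycle

theorem stmt9_general (V : Type*) [DecidableEq V] (G : SimpleGraph V)
    (ℓ : ℕ) (hl : 2 ≤ ℓ) (v : ℕ → V)
    (hinj : Set.InjOn v (Set.Iio (2 * ℓ + 1)))
    (hind : ∀ s < 2 * ℓ + 1, ∀ t < 2 * ℓ + 1, (G.Adj (v s) (v t) ↔
      (t = s + 1 ∨ s = t + 1 ∨ (s = 0 ∧ t = 2 * ℓ) ∨ (t = 0 ∧ s = 2 * ℓ)))) :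
    let L : Multiset (V → ℤ) :=
      (ev (v 0) + ev (v (2 * ℓ))) ::ₘ
        (Multiset.range ℓ).map (fun k => ev (v (2 * k)) + ev (v (2 * k + 1)))
    let R : Multiset (V → ℤ) :=
      ((2 : ℤ) • ev (v 0)) ::ₘ
        (Multiset.range ℓ).map (fun k => ev (v (2 * k + 1)) + ev (v (2 * k + 2)))
    let Conf : Set (V → ℤ) :=
      { w | (∃ x y, G.Adj x y ∧ w = ev x + ev y) ∨ (∃ x, w = (2 : ℤ) • ev x) }
    L.sum = R.sum ∧ Disjoint L R ∧
      ∀ a a' : V → ℤ, ({a, a'} : Multiset (V → ℤ)) ≤ L →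
        ∀ b b' : V → ℤ, b ∈ Conf → b' ∈ Conf → a + a' = b + b' →
          ({a, a'} : Multiset (V → ℤ)) = {b, b'} :=
  ⟨sum_leftSummands v ℓ, disjoint_leftSummands_rightSummands (by omega) hinj,
    fun _ _ hle _ _ hb hb' h => pair_eq_of_pair_le_leftSummands (G := G) hl hinj hind hle hb hb' h⟩

/-- for an induced odd cycle `v_0, ..., v_{2ℓ}` (`2ℓ+1 ≥ 5`) of a graph `G`,
the identity `(e_{v_0}+e_{v_{2ℓ}}) + Σ_{k<ℓ}(e_{v_{2k}}+e_{v_{2k+1}})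
= 2e_{v_0} + Σ_{k<ℓ}(e_{v_{2k+1}}+e_{v_{2k+2}})` holds, the two multisets of summands
are disjoint, and sums of two left-side summands are uniquely represented among the
configuration vectors `e_u + e_w` (`{u,w} ∈ E(G)`) and `2e_w`. -/
theorem stmt9 (V : Type*) [Fintype V] [DecidableEq V] (G : SimpleGraph V)
    (ℓ : ℕ) (hl : 2 ≤ ℓ) (v : ℕ → V)
    (hinj : Set.InjOn v (Set.Iio (2 * ℓ + 1)))
    (hind : ∀ s < 2 * ℓ + 1, ∀ t < 2 * ℓ + 1, (G.Adj (v s) (v t) ↔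
      (t = s + 1 ∨ s = t + 1 ∨ (s = 0 ∧ t = 2 * ℓ) ∨ (t = 0 ∧ s = 2 * ℓ)))) :
    let L : Multiset (V → ℤ) :=
      (ev (v 0) + ev (v (2 * ℓ))) ::ₘ
        (Multiset.range ℓ).map (fun k => ev (v (2 * k)) + ev (v (2 * k + 1)))
    let R : Multiset (V → ℤ) :=
      ((2 : ℤ) • ev (v 0)) ::ₘ
        (Multiset.range ℓ).map (fun k => ev (v (2 * k + 1)) + ev (v (2 * k + 2)))
    let Conf : Set (V → ℤ) :=
      { w | (∃ x y, G.Adj x y ∧ w = ev x + ev y) ∨ (∃ x, w = (2 : ℤ) • ev x) }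
    L.sum = R.sum ∧ Disjoint L R ∧
      ∀ a a' : V → ℤ, ({a, a'} : Multiset (V → ℤ)) ≤ L →
        ∀ b b' : V → ℤ, b ∈ Conf → b' ∈ Conf → a + a' = b + b' →
          ({a, a'} : Multiset (V → ℤ)) = {b, b'} :=
  stmt9_general V G ℓ hl v hinj hind
end

section
/- Let G be a finite simple graph containing an induced sun S_ℓ (ℓ ≥ 3) as an induced subgraph, with vertices v_1,...,v_{2ℓ} where {v_1,...,v_{2ℓ-1} odd-indexed} = {v_1, v_3, ..., v_{2ℓ−1}} is an independent set of G, and edges {v_1,v_2},{v_2,v_3},...,{v_{2ℓ−1},v_{2ℓ}},{v_{2ℓ},v_1} are present. Then Σ_{k=1}^{ℓ}(e_{2k−1} + e_{2k}) = (e_1 + e_{2ℓ}) + Σ_{k=1}^{ℓ−1}(e_{2k} + e_{2k+1}), the summands on the two sides are disjoint as edges, and whenever a + a' = b + b' with a, a' summands from the left side and b, b' vectors of the form e_u + e_v ({u,v} ∈ E(G)) or 2e_w (w a vertex), one has {a, a'} = {b, b'}. -/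
open Multiset

theorem Multiset.pair_eq_pair_iff {α : Type*} {a b c d : α} :
    ({a, b} : Multiset α) = {c, d} ↔ (a = c ∧ b = d) ∨ (a = d ∧ b = c) := by
  simp only [insert_eq_cons, cons_eq_cons, singleton_inj, singleton_eq_cons_iff]
  grind

theorem Multiset.exists_ne_of_pair_le_map {α β : Type*} {f : α → β} {s : Multiset α}
    (hs : s.Nodup) (hf : Set.InjOn f {x | x ∈ s}) {b b' : β}
    (h : ({b, b'} : Multiset β) ≤ s.map f) :
    ∃ a ∈ s, ∃ a' ∈ s, a ≠ a' ∧ f a = b ∧ f a' = b' := by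
  have hne : b ≠ b' := by
    rintro rfl
    exact nodup_iff_le.1 (hs.map_on fun x hx y hy => hf hx hy) b h
  obtain ⟨a, ha, rfl⟩ := mem_map.1 (mem_of_le h (mem_cons_self _ _))
  obtain ⟨a', ha', rfl⟩ :=
    mem_map.1 (mem_of_le h (show b' ∈ ({f a, b'} : Multiset β) by simp))
  exact ⟨a, ha, a', ha', fun h => hne (congrArg f h), rfl, rfl⟩

theorem sum_map_range_pairs_eq {M : Type*} [AddCommMonoid M] (f : ℕ → M) {ℓ : ℕ}
    (hℓ : 0 < ℓ) :
    ((range ℓ).map fun k => f (2 * k) + f (2 * k + 1)).sum =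
      ((f 0 + f (2 * ℓ - 1)) ::ₘ
        (range (ℓ - 1)).map fun k => f (2 * k + 1) + f (2 * k + 2)).sum := by
  obtain ⟨n, rfl⟩ : ∃ n, ℓ = n + 1 := ⟨ℓ - 1, by omega⟩
  rw [sum_cons, show 2 * (n + 1) - 1 = 2 * n + 1 by omega, Nat.add_sub_cancel]
  change ∑ k ∈ Finset.range (n + 1), (f (2 * k) + f (2 * k + 1)) =
    f 0 + f (2 * n + 1) + ∑ k ∈ Finset.range n, (f (2 * k + 1) + f (2 * k + 2))
  rw [Finset.sum_add_distrib, Finset.sum_add_distrib, Finset.sum_range_succ',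
    Finset.sum_range_succ (fun k => f (2 * k + 1))]
  simp only [mul_add, mul_one, mul_zero]
  abel

section StandardBasis

variable {V : Type*} [DecidableEq V]

theorem ev_add_ev_eq_ev_add_ev_iff {a b c d : V} :
    ev a + ev b = ev c + ev d ↔ (a = c ∧ b = d) ∨ (a = d ∧ b = c) := by
  simpa [ev] using Pi.single_add_single_eq_single_add_single (k := a) (l := b) (m := c) (n := d)
    (one_ne_zero (α := ℤ)) one_ne_zero

theorem Set.InjOn.ev_add_ev_eq_ev_add_ev_iff {ι : Type*} {f : ι → V} {s : Set ι}
    (hf : Set.InjOn f s) {a b c d : ι} (ha : a ∈ s) (hb : b ∈ s) (hc : c ∈ s)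
    (hd : d ∈ s) :
    ev (f a) + ev (f b) = ev (f c) + ev (f d) ↔ (a = c ∧ b = d) ∨ (a = d ∧ b = c) := by
  rw [_root_.ev_add_ev_eq_ev_add_ev_iff, hf.eq_iff ha hc, hf.eq_iff hb hd, hf.eq_iff ha hd,
    hf.eq_iff hb hc]

def evSum (M : Multiset V) : V → ℤ := (M.map ev).sum

theorem evSum_apply (M : Multiset V) (t : V) : evSum M t = M.count t := by
  induction M using Multiset.induction_on with
  | empty => simp [evSum]
  | cons a M ih =>
    simp only [evSum, map_cons, sum_cons, Pi.add_apply] at ih ⊢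
    rw [ih, count_cons, ev, Pi.single_apply]
    split_ifs with h <;> simp [h, add_comm]

theorem evSum_injective : Function.Injective (evSum (V := V)) := fun M N h =>
  ext.2 fun t => by
    exact_mod_cast (evSum_apply M t).symm.trans ((congrFun h t).trans (evSum_apply N t))

theorem evSum_add (M N : Multiset V) : evSum (M + N) = evSum M + evSum N := by
  simp [evSum]

theorem evSum_pair (x y : V) : evSum {x, y} = ev x + ev y := by
  simp [evSum]

def confVectors (G : SimpleGraph V) : Set (V → ℤ) :=
  {w | (∃ x y, G.Adj x y ∧ w = ev x + ev y) ∨ (∃ x, w = (2 : ℤ) • ev x)}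

theorem nonneg_of_mem_confVectors {G : SimpleGraph V} {b : V → ℤ} (hb : b ∈ confVectors G) :
    0 ≤ b := by
  rcases hb with ⟨x, y, -, rfl⟩ | ⟨x, rfl⟩
  · exact add_nonneg (Pi.single_nonneg.2 zero_le_one) (Pi.single_nonneg.2 zero_le_one)
  · exact smul_nonneg zero_le_two (Pi.single_nonneg.2 zero_le_one)

theorem exists_adj_of_add_le_one {G : SimpleGraph V} {b b' : V → ℤ} (hb : b ∈ confVectors G)
    (hb' : b' ∈ confVectors G) (hle : b + b' ≤ 1) : ∃ x y, G.Adj x y ∧ b = ev x + ev y := by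
  rcases hb with h | ⟨x, rfl⟩
  · exact h
  · have h1 : 2 + b' x ≤ 1 := by simpa [ev] using hle x
    have h2 : 0 ≤ b' x := nonneg_of_mem_confVectors hb' x
    omega

end StandardBasis

section Sun

variable {V : Type*} {G : SimpleGraph V} {ℓ : ℕ} {v : ℕ → V}

/-- The sun condition in index form: `m` is `2 * i + 1` or the cyclic predecessor of `2 * i`. -/
def SunNeighbours (G : SimpleGraph V) (ℓ : ℕ) (v : ℕ → V) : Prop :=
  ∀ i < ℓ, ∀ m < 2 * ℓ, G.Adj (v (2 * i)) (v m) →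
    m = 2 * i + 1 ∨ m + 1 = 2 * i ∨ (i = 0 ∧ m + 1 = 2 * ℓ)

theorem sunNeighbours_of_adj (hinj : Set.InjOn v (Set.Iio (2 * ℓ)))
    (hodd : ∀ k < ℓ, ∀ x : V, G.Adj (v (2 * k)) x →
      (x = v ((2 * k + 1) % (2 * ℓ)) ∨ x = v ((2 * k + (2 * ℓ - 1)) % (2 * ℓ)))) :
    SunNeighbours G ℓ v := by
  intro i hi m hm h
  have hv : ∀ {n}, n < 2 * ℓ → v m = v n → m = n := fun hn h =>
    hinj (Set.mem_Iio.2 hm) (Set.mem_Iio.2 hn) h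
  rcases hodd i hi (v m) h with h | h
  · rw [Nat.mod_eq_of_lt (by omega)] at h
    exact Or.inl (hv (by omega) h)
  · rcases Nat.eq_zero_or_pos i with rfl | hi0
    · rw [Nat.mod_eq_of_lt (by omega)] at h
      have := hv (by omega) h
      omega
    · rw [show 2 * i + (2 * ℓ - 1) = 2 * i - 1 + 2 * ℓ by omega, Nat.add_mod_right,
        Nat.mod_eq_of_lt (by omega)] at h
      have := hv (by omega) h
      omega

theorem SunNeighbours.partner_eq (hsun : SunNeighbours G ℓ v) (hl : 3 ≤ ℓ) {i j : ℕ}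
    (hi : i < ℓ) (hj : j < ℓ) (hij : i ≠ j) {y z w : V} (hy : G.Adj (v (2 * i)) y)
    (hzw : G.Adj z w) (h : ({y, z, w} : Multiset V) = {v (2 * i + 1), v (2 * j), v (2 * j + 1)}) :
    y = v (2 * i + 1) := by
  have hmem : y ∈ ({v (2 * i + 1), v (2 * j), v (2 * j + 1)} : Multiset V) :=
    h ▸ mem_cons_self _ _
  simp only [insert_eq_cons, mem_cons, mem_singleton] at hmem
  rcases hmem with rfl | rfl | rfl
  · rfl
  · have := hsun i hi (2 * j) (by omega) hy
    omega
  · have hrot : ({v (2 * i + 1), v (2 * j), v (2 * j + 1)} : Multiset V) =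
        v (2 * j + 1) ::ₘ {v (2 * i + 1), v (2 * j)} := by
      simp only [insert_eq_cons, ← cons_zero]
      rw [cons_swap (v (2 * j)), cons_swap (v (2 * i + 1))]
    rw [hrot, insert_eq_cons, cons_inj_right, pair_eq_pair_iff] at h
    have hadj : G.Adj (v (2 * j)) (v (2 * i + 1)) := by
      rcases h with ⟨rfl, rfl⟩ | ⟨rfl, rfl⟩
      exacts [hzw.symm, hzw]
    have := hsun i hi (2 * j + 1) (by omega) hy
    have := hsun j hj (2 * i + 1) (by omega) hadj
    omega

theorem SunNeighbours.edge_pairs_eq (hsun : SunNeighbours G ℓ v) (hl : 3 ≤ ℓ) {i j : ℕ}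
    (hi : i < ℓ) (hj : j < ℓ) (hij : i ≠ j) {x y z w : V} (hxy : G.Adj x y) (hzw : G.Adj z w)
    (h : ({x, y} + {z, w} : Multiset V) = {v (2 * i), v (2 * i + 1)} + {v (2 * j), v (2 * j + 1)}) :
    ({{x, y}, {z, w}} : Multiset (Multiset V)) =
      {{v (2 * i), v (2 * i + 1)}, {v (2 * j), v (2 * j + 1)}} := by
  wlog hmem : v (2 * i) ∈ ({x, y} : Multiset V) generalizing x y z w
  · have hmem' : v (2 * i) ∈ ({x, y} + {z, w} : Multiset V) := h ▸ by simp
    rw [pair_comm]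
    exact this hzw hxy (by rwa [add_comm]) ((mem_add.1 hmem').resolve_left hmem)
  wlog hx : x = v (2 * i) generalizing x y
  · have hy : v (2 * i) = x ∨ v (2 * i) = y := by simpa using hmem
    rw [pair_comm x y]
    exact this hxy.symm (by rwa [pair_comm y x]) (by rw [pair_comm]; exact hmem)
      (hy.resolve_left (Ne.symm hx)).symm
  subst hx
  have hrest : ({y, z, w} : Multiset V) = {v (2 * i + 1), v (2 * j), v (2 * j + 1)} :=
    (cons_inj_right (v (2 * i))).1 h
  obtain rfl := hsun.partner_eq hl hi hj hij hxy hzw hrest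
  rw [(cons_inj_right _).1 hrest]

end Sun

section SunMatchings

variable {V : Type*} [DecidableEq V] {G : SimpleGraph V} {ℓ : ℕ} {v : ℕ → V}

theorem injOn_sun_matching (hinj : Set.InjOn v (Set.Iio (2 * ℓ))) :
    Set.InjOn (fun k => ev (v (2 * k)) + ev (v (2 * k + 1))) {k | k ∈ range ℓ} := by
  intro i hi j hj h
  simp only [Set.mem_ofPred_eq, mem_range] at hi hj
  rw [hinj.ev_add_ev_eq_ev_add_ev_iff (Set.mem_Iio.2 (by omega)) (Set.mem_Iio.2 (by omega))
    (Set.mem_Iio.2 (by omega)) (Set.mem_Iio.2 (by omega))] at h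
  omega

theorem disjoint_sun_matchings (hinj : Set.InjOn v (Set.Iio (2 * ℓ))) (hl : 2 ≤ ℓ) :
    Disjoint ((range ℓ).map fun k => ev (v (2 * k)) + ev (v (2 * k + 1)))
      ((ev (v 0) + ev (v (2 * ℓ - 1))) ::ₘ
        (range (ℓ - 1)).map fun k => ev (v (2 * k + 1)) + ev (v (2 * k + 2))) := by
  rw [disjoint_left]
  rintro _ hL hR
  obtain ⟨k, hk, rfl⟩ := mem_map.1 hL
  rw [mem_range] at hk
  rcases mem_cons.1 hR with h | h
  · rw [hinj.ev_add_ev_eq_ev_add_ev_iff (Set.mem_Iio.2 (by omega)) (Set.mem_Iio.2 (by omega))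
      (Set.mem_Iio.2 (by omega)) (Set.mem_Iio.2 (by omega))] at h
    omega
  · obtain ⟨m, hm, h⟩ := mem_map.1 h
    rw [mem_range] at hm
    rw [hinj.ev_add_ev_eq_ev_add_ev_iff (Set.mem_Iio.2 (by omega)) (Set.mem_Iio.2 (by omega))
      (Set.mem_Iio.2 (by omega)) (Set.mem_Iio.2 (by omega))] at h
    omega

theorem SunNeighbours.pair_eq_of_add_eq (hsun : SunNeighbours G ℓ v)
    (hinj : Set.InjOn v (Set.Iio (2 * ℓ))) (hl : 3 ≤ ℓ) {i j : ℕ} (hi : i < ℓ)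
    (hj : j < ℓ) (hij : i ≠ j) {b b' : V → ℤ} (hb : b ∈ confVectors G) (hb' : b' ∈ confVectors G)
    (h : ev (v (2 * i)) + ev (v (2 * i + 1)) + (ev (v (2 * j)) + ev (v (2 * j + 1))) = b + b') :
    ({ev (v (2 * i)) + ev (v (2 * i + 1)), ev (v (2 * j)) + ev (v (2 * j + 1))} :
      Multiset (V → ℤ)) = {b, b'} := by
  have hPQ : ({v (2 * i), v (2 * i + 1)} + {v (2 * j), v (2 * j + 1)} : Multiset V).Nodup := by
    have hidx : ({2 * i, 2 * i + 1} + {2 * j, 2 * j + 1} : Multiset ℕ).Nodup := by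
      simp only [insert_eq_cons, cons_add, singleton_add, nodup_cons, mem_cons, mem_singleton,
        nodup_singleton, and_true]
      omega
    have hlt : ∀ a ∈ ({2 * i, 2 * i + 1} + {2 * j, 2 * j + 1} : Multiset ℕ),
        a ∈ Set.Iio (2 * ℓ) := by
      simp only [insert_eq_cons, cons_add, singleton_add, mem_cons, mem_singleton, Set.mem_Iio]
      rintro a (rfl | rfl | rfl | rfl) <;> omega
    simpa using hidx.map_on fun a ha b hb => hinj (hlt a ha) (hlt b hb)
  have hle : b + b' ≤ 1 := by
    intro t
    rw [← h, ← evSum_pair, ← evSum_pair, ← evSum_add, evSum_apply, Pi.one_apply]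
    exact Int.ofNat_le.2 (nodup_iff_count_le_one.1 hPQ t)
  obtain ⟨x, y, hxy, rfl⟩ := exists_adj_of_add_le_one hb hb' hle
  obtain ⟨z, w, hzw, rfl⟩ := exists_adj_of_add_le_one hb' hb (by rwa [add_comm])
  have hsum : ({x, y} + {z, w} : Multiset V) =
      {v (2 * i), v (2 * i + 1)} + {v (2 * j), v (2 * j + 1)} := by
    apply evSum_injective
    rw [evSum_add, evSum_add, evSum_pair, evSum_pair, evSum_pair, evSum_pair, h]
  have key := congrArg (map evSum) (hsun.edge_pairs_eq hl hi hj hij hxy hzw hsum).symm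
  simp only [insert_eq_cons, map_cons, map_singleton] at key
  simpa only [← insert_eq_cons, evSum_pair] using key

end SunMatchings

theorem stmt10_general (V : Type*) [DecidableEq V] (G : SimpleGraph V)
    (ℓ : ℕ) (hl : 3 ≤ ℓ) (v : ℕ → V)
    (hinj : Set.InjOn v (Set.Iio (2 * ℓ)))
    (hodd : ∀ k < ℓ, ∀ x : V, G.Adj (v (2 * k)) x →
      (x = v ((2 * k + 1) % (2 * ℓ)) ∨ x = v ((2 * k + (2 * ℓ - 1)) % (2 * ℓ)))) :
    let L : Multiset (V → ℤ) :=
      (Multiset.range ℓ).map (fun k => ev (v (2 * k)) + ev (v (2 * k + 1)))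
    let R : Multiset (V → ℤ) :=
      (ev (v 0) + ev (v (2 * ℓ - 1))) ::ₘ
        (Multiset.range (ℓ - 1)).map (fun k => ev (v (2 * k + 1)) + ev (v (2 * k + 2)))
    let Conf : Set (V → ℤ) :=
      { w | (∃ x y, G.Adj x y ∧ w = ev x + ev y) ∨ (∃ x, w = (2 : ℤ) • ev x) }
    L.sum = R.sum ∧ Disjoint L R ∧
      ∀ a a' : V → ℤ, ({a, a'} : Multiset (V → ℤ)) ≤ L →
        ∀ b b' : V → ℤ, b ∈ Conf → b' ∈ Conf → a + a' = b + b' →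
          ({a, a'} : Multiset (V → ℤ)) = {b, b'} := by
  intro L R Conf
  refine ⟨sum_map_range_pairs_eq (fun m => ev (v m)) (by omega),
    disjoint_sun_matchings hinj (by omega), ?_⟩
  intro a a' hle b b' hb hb' hab
  obtain ⟨i, hi, j, hj, hij, rfl, rfl⟩ :=
    exists_ne_of_pair_le_map (nodup_range ℓ) (injOn_sun_matching hinj) hle
  rw [mem_range] at hi hj
  exact (sunNeighbours_of_adj hinj hodd).pair_eq_of_add_eq hinj hl hi hj hij hb hb' hab

/-- for an induced sun `S_ℓ` (`ℓ ≥ 3`) on vertices `v_0, ..., v_{2ℓ-1}`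
(cycle edges present, even-indexed vertices `v_0, v_2, ...` independent in `G` with the
two cycle neighbours as their only neighbours), the identity
`Σ_{k<ℓ}(e_{v_{2k}}+e_{v_{2k+1}}) = (e_{v_0}+e_{v_{2ℓ-1}}) + Σ_{k<ℓ-1}(e_{v_{2k+1}}+e_{v_{2k+2}})`
holds, the two sides have disjoint summands, and sums of two left-side summands are
uniquely represented among the configuration vectors. -/
theorem stmt10 (V : Type*) [Fintype V] [DecidableEq V] (G : SimpleGraph V)
    (ℓ : ℕ) (hl : 3 ≤ ℓ) (v : ℕ → V)
    (hinj : Set.InjOn v (Set.Iio (2 * ℓ)))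
    (hcyc : ∀ k < 2 * ℓ, G.Adj (v k) (v ((k + 1) % (2 * ℓ))))
    (hodd : ∀ k < ℓ, ∀ x : V, G.Adj (v (2 * k)) x →
      (x = v ((2 * k + 1) % (2 * ℓ)) ∨ x = v ((2 * k + (2 * ℓ - 1)) % (2 * ℓ)))) :
    let L : Multiset (V → ℤ) :=
      (Multiset.range ℓ).map (fun k => ev (v (2 * k)) + ev (v (2 * k + 1)))
    let R : Multiset (V → ℤ) :=
      (ev (v 0) + ev (v (2 * ℓ - 1))) ::ₘ
        (Multiset.range (ℓ - 1)).map (fun k => ev (v (2 * k + 1)) + ev (v (2 * k + 2)))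
    let Conf : Set (V → ℤ) :=
      { w | (∃ x y, G.Adj x y ∧ w = ev x + ev y) ∨ (∃ x, w = (2 : ℤ) • ev x) }
    L.sum = R.sum ∧ Disjoint L R ∧
      ∀ a a' : V → ℤ, ({a, a'} : Multiset (V → ℤ)) ≤ L →
        ∀ b b' : V → ℤ, b ∈ Conf → b' ∈ Conf → a + a' = b + b' →
          ({a, a'} : Multiset (V → ℤ)) = {b, b'} :=
  stmt10_general V G ℓ hl v hinj hodd
end

section
/- Let P be a finite poset whose comparability graph contains an induced cycle of length 2ℓ ≥ 4, and let d ≥ 2. Then there exist multichains D_1, ..., D_r, D'_1, ..., D'_r of P of length d−1 with r = ℓ+1 ≥ 3 such that Σ ρ(D_i) = Σ ρ(D'_i), the sets {D_1,...,D_r} and {D'_1,...,D'_r} are disjoint, and for any two indices k < ℓ' and any multichains E, E' of length d−1, ρ(D_k) + ρ(D_{ℓ'}) = ρ(E) + ρ(E') implies {D_k, D_{ℓ'}} = {E, E'} as multisets. -/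
set_option linter.unusedSectionVars false
namespace Stmt16Aux

open Multiset

variable {α : Type*} [DecidableEq α] [PartialOrder α]

def Incomp (a b : α) : Prop := ¬(a ≤ b ∨ b ≤ a)

theorem Incomp.ne {a b : α} (h : Incomp a b) : a ≠ b :=
  fun e => h (Or.inl (le_of_eq e))

theorem Incomp.symm {a b : α} (h : Incomp a b) : Incomp b a :=
  fun h' => h h'.symm

theorem notMem_of_incomp {E : Multiset α} (hE : ∀ a ∈ E, ∀ b ∈ E, a ≤ b ∨ b ≤ a)
    {a b : α} (hab : Incomp a b) (ha : a ∈ E) : b ∉ E :=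
  fun hb => hab (hE a ha b hb)

theorem counts_of_rho_eq {C C' E E' : Multiset α}
    (h : rho C + rho C' = rho E + rho E') (t : α) :
    count t C + count t C' = count t E + count t E' := by
  have h2 := congrFun h t
  simp only [Pi.add_apply, rho] at h2
  exact_mod_cast h2

theorem mc_pair (d a b : ℕ) (hab : a + b = d) (p q : α) (h : p ≤ q ∨ q ≤ p) :
    IsMultichain d (Multiset.replicate a p + Multiset.replicate b q) := by
  constructor
  · simp [hab]
  · intro u hu v hv
    rcases Multiset.mem_add.mp hu with h1 | h1 <;> rcases Multiset.mem_add.mp hv with h2 | h2 <;>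
      rw [Multiset.eq_of_mem_replicate h1, Multiset.eq_of_mem_replicate h2]
    · exact Or.inl le_rfl
    · exact h
    · exact h.symm
    · exact Or.inl le_rfl

theorem mc_single (d : ℕ) (p : α) : IsMultichain d (Multiset.replicate d p) := by
  constructor
  · simp
  · intro u hu v hv
    rw [Multiset.eq_of_mem_replicate hu, Multiset.eq_of_mem_replicate hv]
    exact Or.inl le_rfl

theorem ne_of_count_ne {M N : Multiset α} (t : α) (h : count t M ≠ count t N) : M ≠ N :=
  fun e => h (by rw [e])

theorem repl_pair_of_counts {E : Multiset α} {p q : α} (hpq : p ≠ q)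
    (h0 : ∀ t, t ≠ p → t ≠ q → count t E = 0) :
    E = replicate (count p E) p + replicate (count q E) q := by
  ext t
  simp only [count_add, count_replicate]
  by_cases h1 : t = p
  · subst h1; simp [hpq, Ne.symm hpq]
  · by_cases h2 : t = q
    · subst h2; simp [hpq, Ne.symm hpq]
    · rw [if_neg (fun hh => h1 hh.symm), if_neg (fun hh => h2 hh.symm)]
      exact h0 t h1 h2

theorem coreAuxB2 (d a b c e : ℕ) (p q r s : α) (hab : a + b = d) (hce : c + e = d)
    (ha : 1 ≤ a) (hc : 1 ≤ c) (hpq : p ≠ q) (hrs : r ≠ s) (hqr : q ≠ r) (hqs : q ≠ s)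
    (hpr : Incomp p r) (hps : Incomp p s)
    {E E' : Multiset α} (hE : IsMultichain d E) (hE' : IsMultichain d E')
    (hcnt : ∀ t, count t (replicate a p + replicate b q) + count t (replicate c r + replicate e s)
        = count t E + count t E')
    (hpE : p ∈ E) :
    E = replicate a p + replicate b q ∧ E' = replicate c r + replicate e s := by
  have hpr' : p ≠ r := hpr.ne
  have hps' : p ≠ s := hps.ne
  have hrE : count r E = 0 := count_eq_zero.mpr (notMem_of_incomp hE.2 hpr hpE)
  have hsE : count s E = 0 := count_eq_zero.mpr (notMem_of_incomp hE.2 hps hpE)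
  have hcr := hcnt r
  simp only [count_add, count_replicate_self, count_replicate, if_neg hpr', if_neg hqr,
    if_neg (Ne.symm hrs)] at hcr
  have hrE' : r ∈ E' := by
    rw [← count_pos]; omega
  have hpE'0 : count p E' = 0 :=
    count_eq_zero.mpr (notMem_of_incomp hE'.2 hpr.symm hrE')
  have hcp := hcnt p
  simp only [count_add, count_replicate_self, count_replicate, if_neg (Ne.symm hpq),
    if_neg (Ne.symm hpr'), if_neg (Ne.symm hps')] at hcp
  have hpEa : count p E = a := by omega
  have h0E : ∀ t, t ≠ p → t ≠ q → count t E = 0 := by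
    intro t h1 h2
    by_cases h3 : t = r
    · rw [h3]; exact hrE
    by_cases h4 : t = s
    · rw [h4]; exact hsE
    have h5 := hcnt t
    simp only [count_add, count_replicate, if_neg (Ne.symm h1), if_neg (Ne.symm h2),
      if_neg (Ne.symm h3), if_neg (Ne.symm h4)] at h5
    omega
  have hEeq := repl_pair_of_counts hpq h0E
  have hcard := hE.1
  rw [hEeq, card_add, card_replicate, card_replicate, hpEa] at hcard
  have hqE : count q E = b := by omega
  have hEC : E = replicate a p + replicate b q := by rw [hEeq, hpEa, hqE]
  refine ⟨hEC, ?_⟩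
  ext t
  have h5 := hcnt t
  rw [hEC] at h5
  omega

theorem pairMain (d a b c e : ℕ) (p q r s : α) (hab : a + b = d) (hce : c + e = d)
    (ha : 1 ≤ a) (hc : 1 ≤ c) (hpq : p ≠ q) (hrs : r ≠ s) (hqr : q ≠ r) (hqs : q ≠ s)
    (hpr : Incomp p r) (hps : Incomp p s)
    {E E' : Multiset α} (hE : IsMultichain d E) (hE' : IsMultichain d E')
    (hrho : rho (replicate a p + replicate b q) + rho (replicate c r + replicate e s)
      = rho E + rho E') :
    ({replicate a p + replicate b q, replicate c r + replicate e s} : Multiset (Multiset α))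
      = {E, E'} := by
  have hcnt := fun t => counts_of_rho_eq hrho t
  have hp := hcnt p
  simp only [count_add, count_replicate_self, count_replicate, if_neg (Ne.symm hpq),
    if_neg (Ne.symm hpr.ne), if_neg (Ne.symm hps.ne)] at hp
  have hmem : p ∈ E ∨ p ∈ E' := by
    rcases Nat.lt_or_ge 0 (count p E) with h | h
    · exact Or.inl (count_pos.mp h)
    · exact Or.inr (count_pos.mp (by omega))
  rcases hmem with hmem | hmem
  · obtain ⟨h1, h2⟩ := coreAuxB2 d a b c e p q r s hab hce ha hc hpq hrs hqr hqs hpr hps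
      hE hE' hcnt hmem
    rw [h1, h2]
  · obtain ⟨h1, h2⟩ := coreAuxB2 d a b c e p q r s hab hce ha hc hpq hrs hqr hqs hpr hps
      hE' hE (fun t => by have := hcnt t; omega) hmem
    rw [h1, h2]
    exact Multiset.pair_comm _ _

theorem coreAuxShared (d a b c e : ℕ) (p w s : α) (hab : a + b = d) (hce : c + e = d)
    (ha : 1 ≤ a) (he : 1 ≤ e) (hpw : p ≠ w) (hws : w ≠ s)
    (hps : Incomp p s)
    {E E' : Multiset α} (hE : IsMultichain d E) (hE' : IsMultichain d E')
    (hcnt : ∀ t, count t (replicate a p + replicate b w) + count t (replicate c w + replicate e s)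
        = count t E + count t E')
    (hpE : p ∈ E) :
    E = replicate a p + replicate b w ∧ E' = replicate c w + replicate e s := by
  have hps' : p ≠ s := hps.ne
  have hsE : count s E = 0 := count_eq_zero.mpr (notMem_of_incomp hE.2 hps hpE)
  have hcs := hcnt s
  simp only [count_add, count_replicate_self, count_replicate, if_neg hps', if_neg hws] at hcs
  have hsE' : s ∈ E' := by
    rw [← count_pos]; omega
  have hpE'0 : count p E' = 0 :=
    count_eq_zero.mpr (notMem_of_incomp hE'.2 hps.symm hsE')
  have hcp := hcnt p
  simp only [count_add, count_replicate_self, count_replicate, if_neg (Ne.symm hpw),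
    if_neg (Ne.symm hps')] at hcp
  have hpEa : count p E = a := by omega
  have h0E : ∀ t, t ≠ p → t ≠ w → count t E = 0 := by
    intro t h1 h2
    by_cases h4 : t = s
    · rw [h4]; exact hsE
    have h5 := hcnt t
    simp only [count_add, count_replicate, if_neg (Ne.symm h1), if_neg (Ne.symm h2),
      if_neg (Ne.symm h4)] at h5
    omega
  have hEeq := repl_pair_of_counts hpw h0E
  have hcard := hE.1
  rw [hEeq, card_add, card_replicate, card_replicate, hpEa] at hcard
  have hwE : count w E = b := by omega
  have hEC : E = replicate a p + replicate b w := by rw [hEeq, hpEa, hwE]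
  refine ⟨hEC, ?_⟩
  ext t
  have h5 := hcnt t
  rw [hEC] at h5
  omega

theorem pairShared (d a b c e : ℕ) (p w s : α) (hab : a + b = d) (hce : c + e = d)
    (ha : 1 ≤ a) (he : 1 ≤ e) (hpw : p ≠ w) (hws : w ≠ s)
    (hps : Incomp p s)
    {E E' : Multiset α} (hE : IsMultichain d E) (hE' : IsMultichain d E')
    (hrho : rho (replicate a p + replicate b w) + rho (replicate c w + replicate e s)
      = rho E + rho E') :
    ({replicate a p + replicate b w, replicate c w + replicate e s} : Multiset (Multiset α))
      = {E, E'} := by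
  have hcnt := fun t => counts_of_rho_eq hrho t
  have hp := hcnt p
  simp only [count_add, count_replicate_self, count_replicate, if_neg (Ne.symm hpw),
    if_neg (Ne.symm hps.ne)] at hp
  have hmem : p ∈ E ∨ p ∈ E' := by
    rcases Nat.lt_or_ge 0 (count p E) with h | h
    · exact Or.inl (count_pos.mp h)
    · exact Or.inr (count_pos.mp (by omega))
  rcases hmem with hmem | hmem
  · obtain ⟨h1, h2⟩ := coreAuxShared d a b c e p w s hab hce ha he hpw hws hps
      hE hE' hcnt hmem
    rw [h1, h2]
  · obtain ⟨h1, h2⟩ := coreAuxShared d a b c e p w s hab hce ha he hpw hws hps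
      hE' hE (fun t => by have := hcnt t; omega) hmem
    rw [h1, h2]
    exact Multiset.pair_comm _ _

theorem coreAuxC4 (d b e : ℕ) (v1 v2 v3 v4 : α) (hb : 2 + b = d) (he : 1 + e = d)
    (h12 : v1 ≠ v2) (h34 : v3 ≠ v4) (h14 : v1 ≠ v4) (h23 : v2 ≠ v3)
    (h13 : Incomp v1 v3) (h24 : Incomp v2 v4)
    {E E' : Multiset α} (hE : IsMultichain d E) (hE' : IsMultichain d E')
    (hcnt : ∀ t, count t (replicate 2 v1 + replicate b v2)
        + count t (replicate 1 v3 + replicate e v4) = count t E + count t E')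
    (h1E : v1 ∈ E) :
    E = replicate 2 v1 + replicate b v2 ∧ E' = replicate 1 v3 + replicate e v4 := by
  have h13' : v1 ≠ v3 := h13.ne
  have h24' : v2 ≠ v4 := h24.ne
  have h3E : count v3 E = 0 := count_eq_zero.mpr (notMem_of_incomp hE.2 h13 h1E)
  have hc3 := hcnt v3
  simp only [count_add, count_replicate_self, count_replicate, if_neg h13',
    if_neg h23, if_neg (Ne.symm h34)] at hc3
  have h3E' : v3 ∈ E' := by
    rw [← count_pos]; omega
  have h1E'0 : count v1 E' = 0 :=
    count_eq_zero.mpr (notMem_of_incomp hE'.2 h13.symm h3E')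
  have hc1 := hcnt v1
  simp only [count_add, count_replicate_self, count_replicate, if_neg (Ne.symm h12),
    if_neg (Ne.symm h13'), if_neg (Ne.symm h14)] at hc1
  have h1Ea : count v1 E = 2 := by omega
  by_cases h4E : v4 ∈ E
  · exfalso
    have h2E : count v2 E = 0 := count_eq_zero.mpr (notMem_of_incomp hE.2 h24.symm h4E)
    have h0E : ∀ t, t ≠ v1 → t ≠ v4 → count t E = 0 := by
      intro t k1 k4
      by_cases k2 : t = v2
      · rw [k2]; exact h2E
      by_cases k3 : t = v3
      · rw [k3]; exact h3E
      have h5 := hcnt t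
      simp only [count_add, count_replicate, if_neg (Ne.symm k1), if_neg (Ne.symm k2),
        if_neg (Ne.symm k3), if_neg (Ne.symm k4)] at h5
      omega
    have hEeq := repl_pair_of_counts h14 h0E
    have hcard := hE.1
    rw [hEeq, card_add, card_replicate, card_replicate, h1Ea] at hcard
    have hc4 := hcnt v4
    simp only [count_add, count_replicate_self, count_replicate, if_neg h14,
      if_neg h24', if_neg h34] at hc4
    have hc2 := hcnt v2
    simp only [count_add, count_replicate_self, count_replicate, if_neg (Ne.symm h12),
      if_neg (Ne.symm h23), if_neg h24'] at hc2
    have h4p : 0 < count v4 E := count_pos.mpr h4E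
    have h4E' : v4 ∈ E' := by
      rw [← count_pos]; omega
    have h2E' : v2 ∈ E' := by
      rw [← count_pos]; omega
    exact (notMem_of_incomp hE'.2 h24 h2E') h4E'
  · have h4E0 : count v4 E = 0 := count_eq_zero.mpr h4E
    have h0E : ∀ t, t ≠ v1 → t ≠ v2 → count t E = 0 := by
      intro t k1 k2
      by_cases k3 : t = v3
      · rw [k3]; exact h3E
      by_cases k4 : t = v4
      · rw [k4]; exact h4E0
      have h5 := hcnt t
      simp only [count_add, count_replicate, if_neg (Ne.symm k1), if_neg (Ne.symm k2),
        if_neg (Ne.symm k3), if_neg (Ne.symm k4)] at h5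
      omega
    have hEeq := repl_pair_of_counts h12 h0E
    have hcard := hE.1
    rw [hEeq, card_add, card_replicate, card_replicate, h1Ea] at hcard
    have h2Eb : count v2 E = b := by omega
    have hEC : E = replicate 2 v1 + replicate b v2 := by rw [hEeq, h1Ea, h2Eb]
    refine ⟨hEC, ?_⟩
    ext t
    have h5 := hcnt t
    rw [hEC] at h5
    omega

theorem pairC4 (d b e : ℕ) (v1 v2 v3 v4 : α) (hb : 2 + b = d) (he : 1 + e = d)
    (h12 : v1 ≠ v2) (h34 : v3 ≠ v4) (h14 : v1 ≠ v4) (h23 : v2 ≠ v3)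
    (h13 : Incomp v1 v3) (h24 : Incomp v2 v4)
    {E E' : Multiset α} (hE : IsMultichain d E) (hE' : IsMultichain d E')
    (hrho : rho (replicate 2 v1 + replicate b v2) + rho (replicate 1 v3 + replicate e v4)
      = rho E + rho E') :
    ({replicate 2 v1 + replicate b v2, replicate 1 v3 + replicate e v4} : Multiset (Multiset α))
      = {E, E'} := by
  have hcnt := fun t => counts_of_rho_eq hrho t
  have hp := hcnt v1
  simp only [count_add, count_replicate_self, count_replicate, if_neg (Ne.symm h12),
    if_neg (Ne.symm h13.ne), if_neg (Ne.symm h14)] at hp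
  have hmem : v1 ∈ E ∨ v1 ∈ E' := by
    rcases Nat.lt_or_ge 0 (count v1 E) with h | h
    · exact Or.inl (count_pos.mp h)
    · exact Or.inr (count_pos.mp (by omega))
  rcases hmem with hmem | hmem
  · obtain ⟨h1, h2⟩ := coreAuxC4 d b e v1 v2 v3 v4 hb he h12 h34 h14 h23 h13 h24
      hE hE' hcnt hmem
    rw [h1, h2]
  · obtain ⟨h1, h2⟩ := coreAuxC4 d b e v1 v2 v3 v4 hb he h12 h34 h14 h23 h13 h24
      hE' hE (fun t => by have := hcnt t; omega) hmem
    rw [h1, h2]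
    exact Multiset.pair_comm _ _

theorem rho_add (C C' : Multiset α) : rho (C + C') = rho C + rho C' := by
  funext t
  simp [rho, count_add]

theorem rho_sum_eq {ι : Type*} [Fintype ι] (f g : ι → Multiset α)
    (h : (∑ k, f k) = ∑ k, g k) : (∑ k, rho (f k)) = ∑ k, rho (g k) := by
  have key : ∀ (s : Finset ι) (f : ι → Multiset α), (∑ k ∈ s, rho (f k)) = rho (∑ k ∈ s, f k) := by
    intro s f
    induction s using Finset.cons_induction with
    | empty => funext t; simp [rho]
    | cons a s ha ih => rw [Finset.sum_cons, Finset.sum_cons, ih, rho_add]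
  rw [key, key, h]

variable (x : ℕ → α) (ℓ d : ℕ)

def Dv : Fin (ℓ+1) → Multiset α := fun k =>
  if k.val = 0 then replicate 2 (x 1) + replicate (d-2) (x 2)
  else if k.val = ℓ then replicate 1 (x 2) + replicate (d-1) (x 3)
  else replicate 1 (x (2*k.val+1)) + replicate (d-1) (x (2*k.val+2))

def D'v : Fin (ℓ+1) → Multiset α := fun k =>
  if k.val = 0 then replicate d (x 3)
  else if k.val = ℓ then replicate 1 (x 1) + replicate (d-1) (x 2)
  else if k.val = ℓ-1 then replicate (d-1) (x (2*k.val+2)) + replicate 1 (x 1)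
  else replicate (d-1) (x (2*k.val+2)) + replicate 1 (x (2*k.val+3))

def Sv : Fin (ℓ+1) → Multiset α := fun k =>
  if k.val = 0 then replicate 2 (x 1) + replicate (d-2) (x 2)
  else if k.val = ℓ then replicate 1 (x 1) + replicate (d-1) (x 3)
  else replicate (d-1) (x 3) + replicate 1 (x (2*k.val+1))

def rhofun : Fin (ℓ+1) → Fin (ℓ+1) :=
  fun k => ⟨if k.val = ℓ then 0 else k.val+1, by have := k.isLt; split_ifs <;> omega⟩

theorem rhofun_inj : Function.Injective (rhofun ℓ) := by
  intro a b h
  have hv := congrArg Fin.val h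
  simp only [rhofun] at hv
  have ha := a.isLt
  have hb := b.isLt
  apply Fin.ext
  split_ifs at hv <;> omega

theorem sum_DD' (hl : 2 ≤ ℓ) (hd : 2 ≤ d) :
    (∑ k, Dv x ℓ d k) = ∑ k, D'v x ℓ d k := by
  have hkey : ∀ k : Fin (ℓ+1), Dv x ℓ d k + Sv x ℓ d (rhofun ℓ k)
      = D'v x ℓ d k + Sv x ℓ d k := by
    intro k
    have hkl := k.isLt
    by_cases hk0 : k.val = 0
    · have hρ : (rhofun ℓ k).val = 1 := by
        show (if (k:ℕ) = ℓ then 0 else (k:ℕ)+1) = 1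
        rw [if_neg (show ¬((k:ℕ) = ℓ) by omega)]
        omega
      have hD : Dv x ℓ d k = replicate 2 (x 1) + replicate (d-2) (x 2) := by
        simp only [Dv]; rw [if_pos hk0]
      have hD' : D'v x ℓ d k = replicate d (x 3) := by
        simp only [D'v]; rw [if_pos hk0]
      have hS : Sv x ℓ d k = replicate 2 (x 1) + replicate (d-2) (x 2) := by
        simp only [Sv]; rw [if_pos hk0]
      have hSρ : Sv x ℓ d (rhofun ℓ k) = replicate (d-1) (x 3) + replicate 1 (x 3) := by
        simp only [Sv]
        rw [hρ, if_neg (by omega), if_neg (by omega), show 2*1+1 = 3 by omega]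
      rw [hD, hD', hS, hSρ]
      ext t
      simp only [count_add, count_replicate]
      split_ifs <;> omega
    · by_cases hkℓ : k.val = ℓ
      · have hρ : (rhofun ℓ k).val = 0 := by
          show (if (k:ℕ) = ℓ then 0 else (k:ℕ)+1) = 0
          rw [if_pos hkℓ]
        have hD : Dv x ℓ d k = replicate 1 (x 2) + replicate (d-1) (x 3) := by
          simp only [Dv]; rw [if_neg hk0, if_pos hkℓ]
        have hD' : D'v x ℓ d k = replicate 1 (x 1) + replicate (d-1) (x 2) := by
          simp only [D'v]; rw [if_neg hk0, if_pos hkℓ]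
        have hS : Sv x ℓ d k = replicate 1 (x 1) + replicate (d-1) (x 3) := by
          simp only [Sv]; rw [if_neg hk0, if_pos hkℓ]
        have hSρ : Sv x ℓ d (rhofun ℓ k) = replicate 2 (x 1) + replicate (d-2) (x 2) := by
          simp only [Sv]
          rw [hρ, if_pos rfl]
        rw [hD, hD', hS, hSρ]
        ext t
        simp only [count_add, count_replicate]
        split_ifs <;> omega
      · by_cases hkℓ1 : k.val = ℓ-1
        · have hρ : (rhofun ℓ k).val = ℓ := by
            show (if (k:ℕ) = ℓ then 0 else (k:ℕ)+1) = ℓ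
            rw [if_neg hkℓ]
            omega
          have hD : Dv x ℓ d k
              = replicate 1 (x (2*k.val+1)) + replicate (d-1) (x (2*k.val+2)) := by
            simp only [Dv]; rw [if_neg hk0, if_neg hkℓ]
          have hD' : D'v x ℓ d k = replicate (d-1) (x (2*k.val+2)) + replicate 1 (x 1) := by
            simp only [D'v]; rw [if_neg hk0, if_neg hkℓ, if_pos hkℓ1]
          have hS : Sv x ℓ d k = replicate (d-1) (x 3) + replicate 1 (x (2*k.val+1)) := by
            simp only [Sv]; rw [if_neg hk0, if_neg hkℓ]
          have hSρ : Sv x ℓ d (rhofun ℓ k) = replicate 1 (x 1) + replicate (d-1) (x 3) := by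
            simp only [Sv]
            rw [hρ, if_neg (by omega), if_pos rfl]
          rw [hD, hD', hS, hSρ]
          ext t
          simp only [count_add, count_replicate]
          split_ifs <;> omega
        · have hρ : (rhofun ℓ k).val = k.val+1 := by
            show (if (k:ℕ) = ℓ then 0 else (k:ℕ)+1) = (k:ℕ)+1
            rw [if_neg hkℓ]
          have hD : Dv x ℓ d k
              = replicate 1 (x (2*k.val+1)) + replicate (d-1) (x (2*k.val+2)) := by
            simp only [Dv]; rw [if_neg hk0, if_neg hkℓ]
          have hD' : D'v x ℓ d k
              = replicate (d-1) (x (2*k.val+2)) + replicate 1 (x (2*k.val+3)) := by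
            simp only [D'v]; rw [if_neg hk0, if_neg hkℓ, if_neg hkℓ1]
          have hS : Sv x ℓ d k = replicate (d-1) (x 3) + replicate 1 (x (2*k.val+1)) := by
            simp only [Sv]; rw [if_neg hk0, if_neg hkℓ]
          have hSρ : Sv x ℓ d (rhofun ℓ k)
              = replicate (d-1) (x 3) + replicate 1 (x (2*k.val+3)) := by
            simp only [Sv]
            rw [hρ, if_neg (by omega), if_neg (by omega),
              show 2*((k:ℕ)+1)+1 = 2*(k:ℕ)+3 by omega]
          rw [hD, hD', hS, hSρ]
          ext t
          simp only [count_add, count_replicate]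
          split_ifs <;> omega
  have h1 : (∑ k, (Dv x ℓ d k + Sv x ℓ d (rhofun ℓ k)))
      = ∑ k, (D'v x ℓ d k + Sv x ℓ d k) :=
    Finset.sum_congr rfl (fun k _ => hkey k)
  rw [Finset.sum_add_distrib, Finset.sum_add_distrib] at h1
  have h2 : (∑ k, Sv x ℓ d (rhofun ℓ k)) = ∑ k, Sv x ℓ d k :=
    Fintype.sum_bijective _ (Finite.injective_iff_bijective.mp (rhofun_inj ℓ)) _ _ (fun k => rfl)
  rw [h2] at h1
  exact add_right_cancel h1

end Stmt16Aux

open Multiset Stmt16Aux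

/-- if the comparability graph of a finite poset has an induced cycle of
even length `2ℓ ≥ 4` and `d ≥ 2`, there are multichains `D_1, ..., D_r, D'_1, ..., D'_r`
of length `d-1` with `r = ℓ+1 ≥ 3`, equal `ρ`-sums, disjoint, such that sums of two of
the `ρ(D_k)` are uniquely represented. -/
theorem stmt16 (α : Type*) [Fintype α] [DecidableEq α] [PartialOrder α]
    (ℓ d : ℕ) (hl : 2 ≤ ℓ) (hd : 2 ≤ d) (x : ℕ → α)
    (hinj : Set.InjOn x (Set.Icc 1 (2 * ℓ)))
    (hcyc : ∀ s ∈ Set.Icc 1 (2 * ℓ), ∀ t ∈ Set.Icc 1 (2 * ℓ),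
      (x s ≠ x t ∧ (x s ≤ x t ∨ x t ≤ x s)) ↔
      (t = s + 1 ∨ s = t + 1 ∨ (s = 1 ∧ t = 2 * ℓ) ∨ (t = 1 ∧ s = 2 * ℓ))) :
    ∃ D D' : Fin (ℓ + 1) → Multiset α,
      (∀ k, IsMultichain d (D k)) ∧ (∀ k, IsMultichain d (D' k)) ∧
      (∑ k, rho (D k)) = (∑ k, rho (D' k)) ∧
      (∀ k k', D k ≠ D' k') ∧
      (∀ k k' : Fin (ℓ + 1), k < k' →
        ∀ E E' : Multiset α, IsMultichain d E → IsMultichain d E' →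
          rho (D k) + rho (D k') = rho E + rho E' →
          ({D k, D k'} : Multiset (Multiset α)) = {E, E'}) := by
  have hne : ∀ i j : ℕ, 1 ≤ i → i ≤ 2*ℓ → 1 ≤ j → j ≤ 2*ℓ → i ≠ j → x i ≠ x j := by
    intro i j h1 h2 h3 h4 h5 h6
    exact h5 (hinj (Set.mem_Icc.mpr ⟨h1, h2⟩) (Set.mem_Icc.mpr ⟨h3, h4⟩) h6)
  have hincomp : ∀ i j : ℕ, 1 ≤ i → j ≤ 2*ℓ → i < j → j ≠ i + 1 → ¬(i = 1 ∧ j = 2*ℓ) →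
      Incomp (x i) (x j) := by
    intro i j h1 h2 h3 h4 h5 hcmp
    have h6 := (hcyc i (Set.mem_Icc.mpr ⟨h1, by omega⟩) j (Set.mem_Icc.mpr ⟨by omega, h2⟩)).mp
      ⟨hne i j h1 (by omega) (by omega) h2 (by omega), hcmp⟩
    omega
  have hcompa : ∀ i : ℕ, 1 ≤ i → i + 1 ≤ 2*ℓ → (x i ≤ x (i+1) ∨ x (i+1) ≤ x i) :=
    fun i h1 h2 => ((hcyc i (Set.mem_Icc.mpr ⟨h1, by omega⟩) (i+1)
      (Set.mem_Icc.mpr ⟨by omega, h2⟩)).mpr (by omega)).2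
  have hcompw : x (2*ℓ) ≤ x 1 ∨ x 1 ≤ x (2*ℓ) := by
    have h := ((hcyc 1 (Set.mem_Icc.mpr ⟨by omega, by omega⟩) (2*ℓ)
      (Set.mem_Icc.mpr ⟨by omega, by omega⟩)).mpr (by omega)).2
    tauto
  refine ⟨Dv x ℓ d, D'v x ℓ d, ?_, ?_, ?_, ?_, ?_⟩
  · -- D multichains
    intro k
    have hkl := k.isLt
    by_cases hk0 : k.val = 0
    · have hD : Dv x ℓ d k = replicate 2 (x 1) + replicate (d-2) (x 2) := by
        simp only [Dv]; rw [if_pos hk0]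
      rw [hD]
      refine mc_pair d 2 (d-2) (by omega) _ _ ?_
      have h := hcompa 1 (by omega) (by omega)
      rwa [show 1+1 = 2 by omega] at h
    · by_cases hkℓ : k.val = ℓ
      · have hD : Dv x ℓ d k = replicate 1 (x 2) + replicate (d-1) (x 3) := by
          simp only [Dv]; rw [if_neg hk0, if_pos hkℓ]
        rw [hD]
        refine mc_pair d 1 (d-1) (by omega) _ _ ?_
        have h := hcompa 2 (by omega) (by omega)
        rwa [show 2+1 = 3 by omega] at h
      · have hD : Dv x ℓ d k
            = replicate 1 (x (2*k.val+1)) + replicate (d-1) (x (2*k.val+2)) := by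
          simp only [Dv]; rw [if_neg hk0, if_neg hkℓ]
        rw [hD]
        refine mc_pair d 1 (d-1) (by omega) _ _ ?_
        have h := hcompa (2*k.val+1) (by omega) (by omega)
        rwa [show 2*k.val+1+1 = 2*k.val+2 by omega] at h
  · -- D' multichains
    intro k
    have hkl := k.isLt
    by_cases hk0 : k.val = 0
    · have hD : D'v x ℓ d k = replicate d (x 3) := by
        simp only [D'v]; rw [if_pos hk0]
      rw [hD]
      exact mc_single d (x 3)
    · by_cases hkℓ : k.val = ℓ
      · have hD : D'v x ℓ d k = replicate 1 (x 1) + replicate (d-1) (x 2) := by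
          simp only [D'v]; rw [if_neg hk0, if_pos hkℓ]
        rw [hD]
        refine mc_pair d 1 (d-1) (by omega) _ _ ?_
        have h := hcompa 1 (by omega) (by omega)
        rwa [show 1+1 = 2 by omega] at h
      · by_cases hkℓ1 : k.val = ℓ-1
        · have hD : D'v x ℓ d k = replicate (d-1) (x (2*k.val+2)) + replicate 1 (x 1) := by
            simp only [D'v]; rw [if_neg hk0, if_neg hkℓ, if_pos hkℓ1]
          rw [hD]
          refine mc_pair d (d-1) 1 (by omega) _ _ ?_
          rw [show 2*k.val+2 = 2*ℓ by omega]
          exact hcompw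
        · have hD : D'v x ℓ d k
              = replicate (d-1) (x (2*k.val+2)) + replicate 1 (x (2*k.val+3)) := by
            simp only [D'v]; rw [if_neg hk0, if_neg hkℓ, if_neg hkℓ1]
          rw [hD]
          refine mc_pair d (d-1) 1 (by omega) _ _ ?_
          have h := hcompa (2*k.val+2) (by omega) (by omega)
          rwa [show 2*k.val+2+1 = 2*k.val+3 by omega] at h
  · -- equal rho sums
    exact rho_sum_eq _ _ (sum_DD' x ℓ d hl hd)
  · -- disjointness
    intro k k'
    have hkl := k.isLt
    have hk'l := k'.isLt
    by_cases hk0 : k.val = 0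
    · have hD : Dv x ℓ d k = replicate 2 (x 1) + replicate (d-2) (x 2) := by
        simp only [Dv]; rw [if_pos hk0]
      rw [hD]
      by_cases h0 : k'.val = 0
      · have hD' : D'v x ℓ d k' = replicate d (x 3) := by
          simp only [D'v]; rw [if_pos h0]
        rw [hD']
        refine ne_of_count_ne (x 1) ?_
        simp only [count_add, count_replicate_self, count_replicate,
          if_neg (hne 2 1 (by omega) (by omega) (by omega) (by omega) (by omega)),
          if_neg (hne 3 1 (by omega) (by omega) (by omega) (by omega) (by omega))]
        omega
      · by_cases hℓ : k'.val = ℓ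
        · have hD' : D'v x ℓ d k' = replicate 1 (x 1) + replicate (d-1) (x 2) := by
            simp only [D'v]; rw [if_neg h0, if_pos hℓ]
          rw [hD']
          refine ne_of_count_ne (x 1) ?_
          simp only [count_add, count_replicate_self, count_replicate,
            if_neg (hne 2 1 (by omega) (by omega) (by omega) (by omega) (by omega))]
          omega
        · by_cases hℓ1 : k'.val = ℓ-1
          · have hD' : D'v x ℓ d k'
                = replicate (d-1) (x (2*k'.val+2)) + replicate 1 (x 1) := by
              simp only [D'v]; rw [if_neg h0, if_neg hℓ, if_pos hℓ1]
            rw [hD']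
            refine ne_of_count_ne (x 1) ?_
            simp only [count_add, count_replicate_self, count_replicate,
              if_neg (hne 2 1 (by omega) (by omega) (by omega) (by omega) (by omega)),
              if_neg (hne (2*k'.val+2) 1 (by omega) (by omega) (by omega) (by omega) (by omega))]
            omega
          · have hD' : D'v x ℓ d k'
                = replicate (d-1) (x (2*k'.val+2)) + replicate 1 (x (2*k'.val+3)) := by
              simp only [D'v]; rw [if_neg h0, if_neg hℓ, if_neg hℓ1]
            rw [hD']
            refine ne_of_count_ne (x 1) ?_
            simp only [count_add, count_replicate_self, count_replicate,
              if_neg (hne 2 1 (by omega) (by omega) (by omega) (by omega) (by omega)),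
              if_neg (hne (2*k'.val+2) 1 (by omega) (by omega) (by omega) (by omega) (by omega)),
              if_neg (hne (2*k'.val+3) 1 (by omega) (by omega) (by omega) (by omega) (by omega))]
            omega
    · by_cases hkℓ : k.val = ℓ
      · have hD : Dv x ℓ d k = replicate 1 (x 2) + replicate (d-1) (x 3) := by
          simp only [Dv]; rw [if_neg hk0, if_pos hkℓ]
        rw [hD]
        by_cases h0 : k'.val = 0
        · have hD' : D'v x ℓ d k' = replicate d (x 3) := by
            simp only [D'v]; rw [if_pos h0]
          rw [hD']
          refine ne_of_count_ne (x 2) ?_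
          simp only [count_add, count_replicate_self, count_replicate,
            if_neg (hne 3 2 (by omega) (by omega) (by omega) (by omega) (by omega))]
          omega
        · by_cases hℓ : k'.val = ℓ
          · have hD' : D'v x ℓ d k' = replicate 1 (x 1) + replicate (d-1) (x 2) := by
              simp only [D'v]; rw [if_neg h0, if_pos hℓ]
            rw [hD']
            refine ne_of_count_ne (x 3) ?_
            simp only [count_add, count_replicate_self, count_replicate,
              if_neg (hne 2 3 (by omega) (by omega) (by omega) (by omega) (by omega)),
              if_neg (hne 1 3 (by omega) (by omega) (by omega) (by omega) (by omega))]
            omega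
          · by_cases hℓ1 : k'.val = ℓ-1
            · have hD' : D'v x ℓ d k'
                  = replicate (d-1) (x (2*k'.val+2)) + replicate 1 (x 1) := by
                simp only [D'v]; rw [if_neg h0, if_neg hℓ, if_pos hℓ1]
              rw [hD']
              refine ne_of_count_ne (x 2) ?_
              simp only [count_add, count_replicate_self, count_replicate,
                if_neg (hne 3 2 (by omega) (by omega) (by omega) (by omega) (by omega)),
                if_neg (hne (2*k'.val+2) 2 (by omega) (by omega) (by omega) (by omega) (by omega)),
                if_neg (hne 1 2 (by omega) (by omega) (by omega) (by omega) (by omega))]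
              omega
            · have hD' : D'v x ℓ d k'
                  = replicate (d-1) (x (2*k'.val+2)) + replicate 1 (x (2*k'.val+3)) := by
                simp only [D'v]; rw [if_neg h0, if_neg hℓ, if_neg hℓ1]
              rw [hD']
              refine ne_of_count_ne (x 2) ?_
              simp only [count_add, count_replicate_self, count_replicate,
                if_neg (hne 3 2 (by omega) (by omega) (by omega) (by omega) (by omega)),
                if_neg (hne (2*k'.val+2) 2 (by omega) (by omega) (by omega) (by omega) (by omega)),
                if_neg (hne (2*k'.val+3) 2 (by omega) (by omega) (by omega) (by omega) (by omega))]
              omega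
      · have hD : Dv x ℓ d k
            = replicate 1 (x (2*k.val+1)) + replicate (d-1) (x (2*k.val+2)) := by
          simp only [Dv]; rw [if_neg hk0, if_neg hkℓ]
        rw [hD]
        by_cases h0 : k'.val = 0
        · have hD' : D'v x ℓ d k' = replicate d (x 3) := by
            simp only [D'v]; rw [if_pos h0]
          rw [hD']
          refine ne_of_count_ne (x (2*k.val+2)) ?_
          simp only [count_add, count_replicate_self, count_replicate,
            if_neg (hne (2*k.val+1) (2*k.val+2) (by omega) (by omega) (by omega) (by omega) (by omega)),
            if_neg (hne 3 (2*k.val+2) (by omega) (by omega) (by omega) (by omega) (by omega))]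
          omega
        · by_cases hℓ : k'.val = ℓ
          · have hD' : D'v x ℓ d k' = replicate 1 (x 1) + replicate (d-1) (x 2) := by
              simp only [D'v]; rw [if_neg h0, if_pos hℓ]
            rw [hD']
            refine ne_of_count_ne (x (2*k.val+1)) ?_
            simp only [count_add, count_replicate_self, count_replicate,
              if_neg (hne (2*k.val+2) (2*k.val+1) (by omega) (by omega) (by omega) (by omega) (by omega)),
              if_neg (hne 1 (2*k.val+1) (by omega) (by omega) (by omega) (by omega) (by omega)),
              if_neg (hne 2 (2*k.val+1) (by omega) (by omega) (by omega) (by omega) (by omega))]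
            omega
          · by_cases hℓ1 : k'.val = ℓ-1
            · have hD' : D'v x ℓ d k'
                  = replicate (d-1) (x (2*k'.val+2)) + replicate 1 (x 1) := by
                simp only [D'v]; rw [if_neg h0, if_neg hℓ, if_pos hℓ1]
              rw [hD']
              refine ne_of_count_ne (x (2*k.val+1)) ?_
              simp only [count_add, count_replicate_self, count_replicate,
                if_neg (hne (2*k.val+2) (2*k.val+1) (by omega) (by omega) (by omega) (by omega) (by omega)),
                if_neg (hne (2*k'.val+2) (2*k.val+1) (by omega) (by omega) (by omega) (by omega) (by omega)),
                if_neg (hne 1 (2*k.val+1) (by omega) (by omega) (by omega) (by omega) (by omega))]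
              omega
            · have hD' : D'v x ℓ d k'
                  = replicate (d-1) (x (2*k'.val+2)) + replicate 1 (x (2*k'.val+3)) := by
                simp only [D'v]; rw [if_neg h0, if_neg hℓ, if_neg hℓ1]
              rw [hD']
              by_cases hkk : k.val = k'.val
              · refine ne_of_count_ne (x (2*k.val+1)) ?_
                simp only [count_add, count_replicate_self, count_replicate,
                  if_neg (hne (2*k.val+2) (2*k.val+1) (by omega) (by omega) (by omega) (by omega) (by omega)),
                  if_neg (hne (2*k'.val+2) (2*k.val+1) (by omega) (by omega) (by omega) (by omega) (by omega)),
                  if_neg (hne (2*k'.val+3) (2*k.val+1) (by omega) (by omega) (by omega) (by omega) (by omega))]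
                omega
              · refine ne_of_count_ne (x (2*k.val+2)) ?_
                simp only [count_add, count_replicate_self, count_replicate,
                  if_neg (hne (2*k.val+1) (2*k.val+2) (by omega) (by omega) (by omega) (by omega) (by omega)),
                  if_neg (hne (2*k'.val+2) (2*k.val+2) (by omega) (by omega) (by omega) (by omega) (by omega)),
                  if_neg (hne (2*k'.val+3) (2*k.val+2) (by omega) (by omega) (by omega) (by omega) (by omega))]
                omega
  · -- pairwise unique representation
    intro k k' hlt E E' hE hE' hrho
    have hkl := k.isLt
    have hk'l := k'.isLt
    have hkk' : k.val < k'.val := hlt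
    by_cases hk0 : k.val = 0
    · have hDk : Dv x ℓ d k = replicate 2 (x 1) + replicate (d-2) (x 2) := by
        simp only [Dv]; rw [if_pos hk0]
      by_cases hℓ : k'.val = ℓ
      · have hDk' : Dv x ℓ d k' = replicate 1 (x 2) + replicate (d-1) (x 3) := by
          simp only [Dv]; rw [if_neg (by omega), if_pos hℓ]
        rw [hDk, hDk'] at hrho ⊢
        exact pairShared d 2 (d-2) 1 (d-1) (x 1) (x 2) (x 3) (by omega) (by omega)
          (by omega) (by omega)
          (hne 1 2 (by omega) (by omega) (by omega) (by omega) (by omega))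
          (hne 2 3 (by omega) (by omega) (by omega) (by omega) (by omega))
          (hincomp 1 3 (by omega) (by omega) (by omega) (by omega) (by omega))
          hE hE' hrho
      · have hDk' : Dv x ℓ d k'
            = replicate 1 (x (2*k'.val+1)) + replicate (d-1) (x (2*k'.val+2)) := by
          simp only [Dv]; rw [if_neg (by omega), if_neg hℓ]
        by_cases hℓ1 : k'.val = ℓ-1
        · by_cases hℓ2 : ℓ = 2
          · -- C4 case
            rw [hDk, hDk'] at hrho ⊢
            exact pairC4 d (d-2) (d-1) (x 1) (x 2) (x (2*k'.val+1)) (x (2*k'.val+2))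
              (by omega) (by omega)
              (hne 1 2 (by omega) (by omega) (by omega) (by omega) (by omega))
              (hne (2*k'.val+1) (2*k'.val+2) (by omega) (by omega) (by omega) (by omega) (by omega))
              (hne 1 (2*k'.val+2) (by omega) (by omega) (by omega) (by omega) (by omega))
              (hne 2 (2*k'.val+1) (by omega) (by omega) (by omega) (by omega) (by omega))
              (hincomp 1 (2*k'.val+1) (by omega) (by omega) (by omega) (by omega) (by omega))
              (hincomp 2 (2*k'.val+2) (by omega) (by omega) (by omega) (by omega) (by omega))
              hE hE' hrho
          · -- reversed B2, ℓ ≥ 3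
            rw [add_comm (rho (Dv x ℓ d k)) (rho (Dv x ℓ d k'))] at hrho
            rw [hDk, hDk'] at hrho ⊢
            rw [Multiset.pair_comm]
            exact pairMain d 1 (d-1) 2 (d-2) (x (2*k'.val+1)) (x (2*k'.val+2)) (x 1) (x 2)
              (by omega) (by omega) (by omega) (by omega)
              (hne (2*k'.val+1) (2*k'.val+2) (by omega) (by omega) (by omega) (by omega) (by omega))
              (hne 1 2 (by omega) (by omega) (by omega) (by omega) (by omega))
              (hne (2*k'.val+2) 1 (by omega) (by omega) (by omega) (by omega) (by omega))
              (hne (2*k'.val+2) 2 (by omega) (by omega) (by omega) (by omega) (by omega))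
              ((hincomp 1 (2*k'.val+1) (by omega) (by omega) (by omega) (by omega) (by omega)).symm)
              ((hincomp 2 (2*k'.val+1) (by omega) (by omega) (by omega) (by omega) (by omega)).symm)
              hE hE' hrho
        · -- direct B2, k' ≤ ℓ-2
          rw [hDk, hDk'] at hrho ⊢
          exact pairMain d 2 (d-2) 1 (d-1) (x 1) (x 2) (x (2*k'.val+1)) (x (2*k'.val+2))
            (by omega) (by omega) (by omega) (by omega)
            (hne 1 2 (by omega) (by omega) (by omega) (by omega) (by omega))
            (hne (2*k'.val+1) (2*k'.val+2) (by omega) (by omega) (by omega) (by omega) (by omega))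
            (hne 2 (2*k'.val+1) (by omega) (by omega) (by omega) (by omega) (by omega))
            (hne 2 (2*k'.val+2) (by omega) (by omega) (by omega) (by omega) (by omega))
            (hincomp 1 (2*k'.val+1) (by omega) (by omega) (by omega) (by omega) (by omega))
            (hincomp 1 (2*k'.val+2) (by omega) (by omega) (by omega) (by omega) (by omega))
            hE hE' hrho
    · -- k is a middle index
      by_cases hℓ : k'.val = ℓ
      · have hDk' : Dv x ℓ d k' = replicate 1 (x 2) + replicate (d-1) (x 3) := by
          simp only [Dv]; rw [if_neg (by omega), if_pos hℓ]
        by_cases hk1 : k.val = 1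
        · have hDk : Dv x ℓ d k = replicate 1 (x 3) + replicate (d-1) (x 4) := by
            simp only [Dv]
            rw [if_neg hk0, if_neg (by omega), show 2*k.val+1 = 3 by omega,
              show 2*k.val+2 = 4 by omega]
          rw [add_comm (rho (Dv x ℓ d k)) (rho (Dv x ℓ d k'))] at hrho
          rw [hDk, hDk'] at hrho ⊢
          rw [Multiset.pair_comm]
          exact pairShared d 1 (d-1) 1 (d-1) (x 2) (x 3) (x 4) (by omega) (by omega)
            (by omega) (by omega)
            (hne 2 3 (by omega) (by omega) (by omega) (by omega) (by omega))
            (hne 3 4 (by omega) (by omega) (by omega) (by omega) (by omega))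
            (hincomp 2 4 (by omega) (by omega) (by omega) (by omega) (by omega))
            hE hE' hrho
        · have hDk : Dv x ℓ d k
              = replicate 1 (x (2*k.val+1)) + replicate (d-1) (x (2*k.val+2)) := by
            simp only [Dv]; rw [if_neg hk0, if_neg (by omega)]
          rw [add_comm (rho (Dv x ℓ d k)) (rho (Dv x ℓ d k'))] at hrho
          rw [hDk, hDk'] at hrho ⊢
          rw [Multiset.pair_comm]
          exact pairMain d 1 (d-1) 1 (d-1) (x 2) (x 3) (x (2*k.val+1)) (x (2*k.val+2))
            (by omega) (by omega) (by omega) (by omega)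
            (hne 2 3 (by omega) (by omega) (by omega) (by omega) (by omega))
            (hne (2*k.val+1) (2*k.val+2) (by omega) (by omega) (by omega) (by omega) (by omega))
            (hne 3 (2*k.val+1) (by omega) (by omega) (by omega) (by omega) (by omega))
            (hne 3 (2*k.val+2) (by omega) (by omega) (by omega) (by omega) (by omega))
            (hincomp 2 (2*k.val+1) (by omega) (by omega) (by omega) (by omega) (by omega))
            (hincomp 2 (2*k.val+2) (by omega) (by omega) (by omega) (by omega) (by omega))
            hE hE' hrho
      · -- both middle
        have hDk : Dv x ℓ d k
            = replicate 1 (x (2*k.val+1)) + replicate (d-1) (x (2*k.val+2)) := by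
          simp only [Dv]; rw [if_neg hk0, if_neg (by omega)]
        have hDk' : Dv x ℓ d k'
            = replicate 1 (x (2*k'.val+1)) + replicate (d-1) (x (2*k'.val+2)) := by
          simp only [Dv]; rw [if_neg (by omega), if_neg hℓ]
        rw [hDk, hDk'] at hrho ⊢
        exact pairMain d 1 (d-1) 1 (d-1) (x (2*k.val+1)) (x (2*k.val+2))
          (x (2*k'.val+1)) (x (2*k'.val+2))
          (by omega) (by omega) (by omega) (by omega)
          (hne (2*k.val+1) (2*k.val+2) (by omega) (by omega) (by omega) (by omega) (by omega))
          (hne (2*k'.val+1) (2*k'.val+2) (by omega) (by omega) (by omega) (by omega) (by omega))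
          (hne (2*k.val+2) (2*k'.val+1) (by omega) (by omega) (by omega) (by omega) (by omega))
          (hne (2*k.val+2) (2*k'.val+2) (by omega) (by omega) (by omega) (by omega) (by omega))
          (hincomp (2*k.val+1) (2*k'.val+1) (by omega) (by omega) (by omega) (by omega) (by omega))
          (hincomp (2*k.val+1) (2*k'.val+2) (by omega) (by omega) (by omega) (by omega) (by omega))
          hE hE' hrho
end
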